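/- arXiv:1902.08272 — 5 statements merged into one kernel-verified Lean document; each statement's English description precedes it below -/
import Mathlib

section
/- The unary language P₂ = { aⁿ : n is a power of two, i.e. n = 2^k for some k ≥ 0 } over the one-letter alphabet {a} is recognised by some total parsing expression grammar; that is, P₂ ∈ PEG. -/
/-! ## Parsing expression grammars -/

/-- Parsing expressions over terminal alphabet `α` and non-terminal alphabet `ν`. -/
inductive PExp (α : Type) (ν : Type) : Type where
  | eps : PExp α ν
  | fail : PExp α ν
  | term (a : α) : PExp α ν
  | nt (A : ν) : PExp α ν
  | notP (e : PExp α ν) : PExp α ν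
  | andP (e : PExp α ν) : PExp α ν
  | seq (e₁ e₂ : PExp α ν) : PExp α ν
  | choice (e₁ e₂ : PExp α ν) : PExp α ν

/-- Big-step semantics of the recognition map `Rec` of a PEG with rules `R`:
`PegRec R e x r` holds iff `Rec(e,x)` is defined and equals `r`, where
`r = none` codes `FAIL` and `r = some y` codes the consumed prefix `y` of `x`. -/
inductive PegRec {α ν : Type} (R : ν → PExp α ν) :
    PExp α ν → List α → Option (List α) → Prop where
  | eps (x : List α) : PegRec R .eps x (some [])
  | fail (x : List α) : PegRec R .fail x none
  | termOk (a : α) (z : List α) : PegRec R (.term a) (a :: z) (some [a])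
  | termMismatch (a b : α) (z : List α) (h : a ≠ b) : PegRec R (.term a) (b :: z) none
  | termNil (a : α) : PegRec R (.term a) [] none
  | notFail (e : PExp α ν) (x : List α) :
      PegRec R e x none → PegRec R (.notP e) x (some [])
  | notSucc (e : PExp α ν) (x y : List α) :
      PegRec R e x (some y) → PegRec R (.notP e) x none
  | andSucc (e : PExp α ν) (x y : List α) :
      PegRec R e x (some y) → PegRec R (.andP e) x (some [])
  | andFail (e : PExp α ν) (x : List α) :
      PegRec R e x none → PegRec R (.andP e) x none
  | seqOk (e₁ e₂ : PExp α ν) (y₁ z y₂ : List α) :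
      PegRec R e₁ (y₁ ++ z) (some y₁) → PegRec R e₂ z (some y₂) →
      PegRec R (.seq e₁ e₂) (y₁ ++ z) (some (y₁ ++ y₂))
  | seqFail₁ (e₁ e₂ : PExp α ν) (x : List α) :
      PegRec R e₁ x none → PegRec R (.seq e₁ e₂) x none
  | seqFail₂ (e₁ e₂ : PExp α ν) (y₁ z : List α) :
      PegRec R e₁ (y₁ ++ z) (some y₁) → PegRec R e₂ z none →
      PegRec R (.seq e₁ e₂) (y₁ ++ z) none
  | choice₁ (e₁ e₂ : PExp α ν) (x y : List α) :
      PegRec R e₁ x (some y) → PegRec R (.choice e₁ e₂) x (some y)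
  | choice₂ (e₁ e₂ : PExp α ν) (x : List α) (r : Option (List α)) :
      PegRec R e₁ x none → PegRec R e₂ x r → PegRec R (.choice e₁ e₂) x r
  | ntRule (A : ν) (x : List α) (r : Option (List α)) :
      PegRec R (R A) x r → PegRec R (.nt A) x r

/-- A parsing expression grammar over the (finite) terminal alphabet `α`:
a finite alphabet `ν` of non-terminals, a rule for each non-terminal,
and a starting non-terminal. -/
structure PEG (α : Type) : Type 1 where
  ν : Type
  finNT : Finite ν
  R : ν → PExp α ν
  S : ν

/-- A PEG is total if its recognition map is total (defined on every expression and input). -/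
def PEG.Total {α : Type} (G : PEG α) : Prop :=
  ∀ (e : PExp α G.ν) (x : List α), ∃ r, PegRec G.R e x r

/-- The language recognised by a PEG: strings on which the starting
non-terminal succeeds and consumes the whole input. -/
def PEG.Lang {α : Type} (G : PEG α) : Set (List α) :=
  { x | PegRec G.R (.nt G.S) x (some x) }

/-- A language is in the class `PEG` iff some total parsing expression grammar recognises it. -/
def IsPEGLang {α : Type} (L : Set (List α)) : Prop :=
  ∃ G : PEG α, G.Total ∧ G.Lang = L

namespace PowTwoPEG

/-- The grammar: `true ↦ P`, `false ↦ H` with rules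
`P ← a a H / a` and `H ← a H a / ε`. -/
def gR : Bool → PExp Unit Bool
  | true => .choice (.seq (.term ()) (.seq (.term ()) (.nt false))) (.term ())
  | false => .choice (.seq (.term ()) (.seq (.nt false) (.term ()))) .eps

def rep (n : ℕ) : List Unit := List.replicate n ()

@[simp] lemma rep_length (n : ℕ) : (rep n).length = n := by simp [rep]

lemma unit_list (x : List Unit) : x = rep x.length := by
  induction x with
  | nil => rfl
  | cons a t ih => cases a; simp [rep, List.replicate_succ] at *; exact ih

/-- The consumption function of `H` on `a^m`. -/
def hf : ℕ → ℕ
  | 0 => 0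
  | m + 1 => if hf m + 1 ≤ m then hf m + 2 else 0

lemma hf_le (m : ℕ) : hf m ≤ m := by
  induction m with
  | zero => simp [hf]
  | succ n ih => simp only [hf]; split <;> omega

lemma hf_eq (m : ℕ) : hf m = 2 * (m + 1 - 2 ^ Nat.log 2 (m + 1)) := by
  induction m with
  | zero => simp [hf]
  | succ n ih =>
    have hK1 : 2 ^ Nat.log 2 (n + 1) ≤ n + 1 := Nat.pow_log_le_self 2 (by omega)
    have hK2 : n + 1 < 2 ^ (Nat.log 2 (n + 1) + 1) := Nat.lt_pow_succ_log_self (by norm_num) _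
    set K := Nat.log 2 (n + 1) with hKdef
    have hpow : (2:ℕ) ^ (K + 1) = 2 * 2 ^ K := by ring
    by_cases hc : hf n + 1 ≤ n
    · have hlog : Nat.log 2 (n + 2) = K := by
        apply Nat.log_eq_of_pow_le_of_lt_pow
        · omega
        · rw [hpow]; omega
      simp only [hf, if_pos hc, hlog]
      omega
    · have hn : hf n = n := le_antisymm (hf_le n) (by omega)
      have h2A : 2 * 2 ^ K = n + 2 := by omega
      have hlog : Nat.log 2 (n + 2) = K + 1 := by
        apply Nat.log_eq_of_pow_le_of_lt_pow
        · rw [hpow]; omega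
        · have : (2:ℕ) ^ (K + 1 + 1) = 2 * (2 * 2 ^ K) := by ring
          rw [this]; omega
      simp only [hf, if_neg hc, hlog]
      rw [hpow]
      omega

lemma hf_fix_iff (s : ℕ) : hf s = s ↔ ∃ k, s + 2 = 2 ^ k := by
  constructor
  · intro h
    have he := hf_eq s
    have hK1 : 2 ^ Nat.log 2 (s + 1) ≤ s + 1 := Nat.pow_log_le_self 2 (by omega)
    refine ⟨Nat.log 2 (s + 1) + 1, ?_⟩
    have hpow : (2:ℕ) ^ (Nat.log 2 (s + 1) + 1) = 2 * 2 ^ Nat.log 2 (s + 1) := by ring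
    omega
  · rintro ⟨k, hk⟩
    match k with
    | 0 => omega
    | j + 1 =>
      have hpow : (2:ℕ) ^ (j + 1) = 2 * 2 ^ j := by ring
      have hj : (1:ℕ) ≤ 2 ^ j := Nat.one_le_two_pow
      have hlog : Nat.log 2 (s + 1) = j := by
        apply Nat.log_eq_of_pow_le_of_lt_pow <;> omega
      have := hf_eq s
      rw [hlog] at this
      omega

/-- Every successful parse consumes a prefix. -/
lemma peg_prefix {α ν : Type} {R : ν → PExp α ν} {e : PExp α ν} {x : List α}
    {r : Option (List α)} (hd : PegRec R e x r) :
    ∀ y, r = some y → ∃ z, x = y ++ z := by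
  induction hd with
  | eps x => intro y hy; injection hy with h; subst h; exact ⟨x, rfl⟩
  | fail x => intro y hy; cases hy
  | termOk a z => intro y hy; injection hy with h; subst h; exact ⟨z, rfl⟩
  | termMismatch a b z h => intro y hy; cases hy
  | termNil a => intro y hy; cases hy
  | notFail e x _ _ => intro y hy; injection hy with h; subst h; exact ⟨x, rfl⟩
  | notSucc e x y _ _ => intro y hy; cases hy
  | andSucc e x y _ _ => intro y hy; injection hy with h; subst h; exact ⟨x, rfl⟩
  | andFail e x _ _ => intro y hy; cases hy
  | seqOk e₁ e₂ y₁ z y₂ h1 h2 ih1 ih2 =>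
    intro y hy; injection hy with h; subst h
    obtain ⟨z₂, hz⟩ := ih2 y₂ rfl
    exact ⟨z₂, by rw [hz, List.append_assoc]⟩
  | seqFail₁ e₁ e₂ x _ _ => intro y hy; cases hy
  | seqFail₂ e₁ e₂ y₁ z _ _ _ _ => intro y hy; cases hy
  | choice₁ e₁ e₂ x y _ ih => exact ih
  | choice₂ e₁ e₂ x r _ _ _ ih => exact ih
  | ntRule A x r _ ih => exact ih

/-- The recognition relation is deterministic. -/
lemma peg_det {α ν : Type} {R : ν → PExp α ν} {e : PExp α ν} {x : List α}
    {r₁ r₂ : Option (List α)} (h₁ : PegRec R e x r₁) (h₂ : PegRec R e x r₂) :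
    r₁ = r₂ := by
  induction h₁ generalizing r₂ with
  | eps x => cases h₂; rfl
  | fail x => cases h₂; rfl
  | termOk a z =>
    cases h₂ with
    | termOk => rfl
    | termMismatch _ _ _ h => exact absurd rfl h
  | termMismatch a b z hne =>
    cases h₂ with
    | termOk => exact absurd rfl hne
    | termMismatch => rfl
  | termNil a => cases h₂; rfl
  | notFail e x hsub ih =>
    cases h₂ with
    | notFail => rfl
    | notSucc _ _ y hs => exact absurd (ih hs) (by simp)
  | notSucc e x y hsub ih =>
    cases h₂ with
    | notFail _ _ hs => exact absurd (ih hs) (by simp)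
    | notSucc => rfl
  | andSucc e x y hsub ih =>
    cases h₂ with
    | andSucc => rfl
    | andFail _ _ hs => exact absurd (ih hs) (by simp)
  | andFail e x hsub ih =>
    cases h₂ with
    | andSucc _ _ y hs => exact absurd (ih hs) (by simp)
    | andFail => rfl
  | seqOk e₁ e₂ y₁ z y₂ hs₁ hs₂ ih₁ ih₂ =>
    generalize hx : y₁ ++ z = x0 at h₂
    cases h₂ with
    | seqOk e₁' e₂' y₁' z' y₂' hs₁' hs₂' =>
      rw [← hx] at hs₁'
      have h5 := ih₁ hs₁'
      injection h5 with h5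
      subst h5
      have hz : z = z' := List.append_cancel_left hx
      subst hz
      have h6 := ih₂ hs₂'
      injection h6 with h6
      rw [h6]
    | seqFail₁ _ _ _ hs₁' =>
      rw [← hx] at hs₁'
      exact absurd (ih₁ hs₁') (by simp)
    | seqFail₂ _ _ y₁' z' hs₁' hs₂' =>
      rw [← hx] at hs₁'
      have h5 := ih₁ hs₁'
      injection h5 with h5
      subst h5
      have hz : z = z' := List.append_cancel_left hx
      subst hz
      exact absurd (ih₂ hs₂') (by simp)
  | seqFail₁ e₁ e₂ x hsub ih =>
    cases h₂ with
    | seqOk _ _ _ _ _ hs₁' _ => exact absurd (ih hs₁') (by simp)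
    | seqFail₁ => rfl
    | seqFail₂ _ _ _ _ hs₁' _ => exact absurd (ih hs₁') (by simp)
  | seqFail₂ e₁ e₂ y₁ z hs₁ hs₂ ih₁ ih₂ =>
    generalize hx : y₁ ++ z = x0 at h₂
    cases h₂ with
    | seqOk e₁' e₂' y₁' z' y₂' hs₁' hs₂' =>
      rw [← hx] at hs₁'
      have h5 := ih₁ hs₁'
      injection h5 with h5
      subst h5
      have hz : z = z' := List.append_cancel_left hx
      subst hz
      exact absurd (ih₂ hs₂') (by simp)
    | seqFail₁ _ _ _ hs₁' => rfl
    | seqFail₂ _ _ y₁' z' hs₁' hs₂' => rfl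
  | choice₁ e₁ e₂ x y hsub ih =>
    cases h₂ with
    | choice₁ _ _ _ y' hs => exact ih hs
    | choice₂ _ _ _ _ hs _ => exact absurd (ih hs) (by simp)
  | choice₂ e₁ e₂ x r hf' hsub ihf ih =>
    cases h₂ with
    | choice₁ _ _ _ y' hs => exact absurd (ihf hs) (by simp)
    | choice₂ _ _ _ _ _ hs => exact ih hs
  | ntRule A x r hsub ih =>
    cases h₂ with
    | ntRule _ _ _ hs => exact ih hs

end PowTwoPEG
namespace PowTwoPEG

lemma recH (m : ℕ) : PegRec gR (.nt false) (rep m) (some (rep (hf m))) := by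
  induction m with
  | zero =>
    apply PegRec.ntRule
    show PegRec gR (.choice (.seq (.term ()) (.seq (.nt false) (.term ()))) .eps)
      (rep 0) (some (rep (hf 0)))
    exact PegRec.choice₂ _ _ _ _ (PegRec.seqFail₁ _ _ _ (PegRec.termNil ())) (PegRec.eps _)
  | succ n ih =>
    apply PegRec.ntRule
    show PegRec gR (.choice (.seq (.term ()) (.seq (.nt false) (.term ()))) .eps)
      (rep (n + 1)) (some (rep (hf (n + 1))))
    by_cases hc : hf n + 1 ≤ n
    · -- successful case: consume a, H, a
      have hsplit : hf n + (n - hf n) = n := by have := hf_le n; omega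
      have hrep : rep n = rep (hf n) ++ rep (n - hf n) := by
        rw [rep, rep, rep, ← List.replicate_add, hsplit]
      obtain ⟨s, hs⟩ : ∃ s, n - hf n = s + 1 := ⟨n - hf n - 1, by omega⟩
      have term2 : PegRec gR (.term ()) (rep (n - hf n)) (some [()]) := by
        rw [hs, rep, List.replicate_succ]
        exact PegRec.termOk () _
      have inner1 : PegRec gR (.nt false) (rep (hf n) ++ rep (n - hf n)) (some (rep (hf n))) := by
        rw [← hrep]; exact ih
      have inner : PegRec gR (.seq (.nt false) (.term ())) (rep n) (some (rep (hf n + 1))) := by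
        rw [hrep, show rep (hf n + 1) = rep (hf n) ++ [()] from by
          simp [rep, List.replicate_succ']]
        exact PegRec.seqOk _ _ _ _ _ inner1 term2
      have outer : PegRec gR (.seq (.term ()) (.seq (.nt false) (.term ())))
          ([()] ++ rep n) (some ([()] ++ rep (hf n + 1))) :=
        PegRec.seqOk _ _ [()] (rep n) _ (PegRec.termOk () (rep n)) inner
      have hstep : hf (n + 1) = hf n + 2 := by simp [hf, hc]
      rw [hstep, show rep (n + 1) = [()] ++ rep n from by simp [rep, List.replicate_succ],
        show rep (hf n + 2) = [()] ++ rep (hf n + 1) from by simp [rep, List.replicate_succ]]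
      exact PegRec.choice₁ _ _ _ _ outer
    · -- failing case: H consumes everything, trailing a fails
      have hn : hf n = n := le_antisymm (hf_le n) (by omega)
      have ih' : PegRec gR (.nt false) (rep n ++ []) (some (rep n)) := by
        rw [List.append_nil]; rw [hn] at ih; exact ih
      have innerF : PegRec gR (.seq (.nt false) (.term ())) (rep n) none := by
        have := PegRec.seqFail₂ (R := gR) (.nt false) (.term ()) (rep n) [] ih' (PegRec.termNil ())
        rwa [List.append_nil] at this
      have outerF : PegRec gR (.seq (.term ()) (.seq (.nt false) (.term ())))
          ([()] ++ rep n) none :=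
        PegRec.seqFail₂ _ _ [()] (rep n) (PegRec.termOk () (rep n)) innerF
      have hstep : hf (n + 1) = 0 := by simp [hf, hc]
      rw [hstep, show rep (n + 1) = [()] ++ rep n from by simp [rep, List.replicate_succ]]
      exact PegRec.choice₂ _ _ _ _ outerF (PegRec.eps _)

lemma recP0 : PegRec gR (.nt true) (rep 0) none := by
  apply PegRec.ntRule
  show PegRec gR (.choice (.seq (.term ()) (.seq (.term ()) (.nt false))) (.term ()))
    (rep 0) none
  exact PegRec.choice₂ _ _ _ _ (PegRec.seqFail₁ _ _ _ (PegRec.termNil ())) (PegRec.termNil ())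

lemma recP1 : PegRec gR (.nt true) (rep 1) (some (rep 1)) := by
  apply PegRec.ntRule
  show PegRec gR (.choice (.seq (.term ()) (.seq (.term ()) (.nt false))) (.term ()))
    (rep 1) (some (rep 1))
  have inner : PegRec gR (.seq (.term ()) (.nt false)) ([] : List Unit) none :=
    PegRec.seqFail₁ _ _ _ (PegRec.termNil ())
  have outerF : PegRec gR (.seq (.term ()) (.seq (.term ()) (.nt false)))
      ([()] ++ []) none :=
    PegRec.seqFail₂ _ _ [()] [] (PegRec.termOk () []) inner
  rw [show rep 1 = [()] ++ [] from rfl]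
  exact PegRec.choice₂ _ _ _ _ outerF (PegRec.termOk () [])

lemma recP2 (m : ℕ) : PegRec gR (.nt true) (rep (m + 2)) (some (rep (hf m + 2))) := by
  apply PegRec.ntRule
  show PegRec gR (.choice (.seq (.term ()) (.seq (.term ()) (.nt false))) (.term ()))
    (rep (m + 2)) (some (rep (hf m + 2)))
  have inner : PegRec gR (.seq (.term ()) (.nt false))
      ([()] ++ rep m) (some ([()] ++ rep (hf m))) :=
    PegRec.seqOk _ _ [()] (rep m) _ (PegRec.termOk () (rep m)) (recH m)
  have outer : PegRec gR (.seq (.term ()) (.seq (.term ()) (.nt false)))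
      ([()] ++ ([()] ++ rep m)) (some ([()] ++ ([()] ++ rep (hf m)))) :=
    PegRec.seqOk _ _ [()] ([()] ++ rep m) _ (PegRec.termOk () _) inner
  rw [show rep (m + 2) = [()] ++ ([()] ++ rep m) from by simp [rep, List.replicate_succ],
    show rep (hf m + 2) = [()] ++ ([()] ++ rep (hf m)) from by simp [rep, List.replicate_succ]]
  exact PegRec.choice₁ _ _ _ _ outer

lemma ntP_total (m : ℕ) : ∃ r, PegRec gR (.nt true) (rep m) r :=
  match m with
  | 0 => ⟨_, recP0⟩
  | 1 => ⟨_, recP1⟩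
  | s + 2 => ⟨_, recP2 s⟩

lemma gR_total (e : PExp Unit Bool) (x : List Unit) : ∃ r, PegRec gR e x r := by
  induction e generalizing x with
  | eps => exact ⟨_, PegRec.eps x⟩
  | fail => exact ⟨_, PegRec.fail x⟩
  | term a =>
    cases x with
    | nil => exact ⟨_, PegRec.termNil a⟩
    | cons b t => cases a; cases b; exact ⟨_, PegRec.termOk () t⟩
  | nt A =>
    rw [unit_list x]
    cases A
    · exact ⟨_, recH x.length⟩
    · exact ntP_total x.length
  | notP e ih =>
    obtain ⟨r, hr⟩ := ih x
    cases r with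
    | none => exact ⟨_, PegRec.notFail _ _ hr⟩
    | some y => exact ⟨_, PegRec.notSucc _ _ _ hr⟩
  | andP e ih =>
    obtain ⟨r, hr⟩ := ih x
    cases r with
    | none => exact ⟨_, PegRec.andFail _ _ hr⟩
    | some y => exact ⟨_, PegRec.andSucc _ _ _ hr⟩
  | seq e₁ e₂ ih₁ ih₂ =>
    obtain ⟨r₁, h₁⟩ := ih₁ x
    cases r₁ with
    | none => exact ⟨_, PegRec.seqFail₁ _ _ _ h₁⟩
    | some y₁ =>
      obtain ⟨z, rfl⟩ := peg_prefix h₁ y₁ rfl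
      obtain ⟨r₂, h₂⟩ := ih₂ z
      cases r₂ with
      | none => exact ⟨_, PegRec.seqFail₂ _ _ _ _ h₁ h₂⟩
      | some y₂ => exact ⟨_, PegRec.seqOk _ _ _ _ _ h₁ h₂⟩
  | choice e₁ e₂ ih₁ ih₂ =>
    obtain ⟨r₁, h₁⟩ := ih₁ x
    cases r₁ with
    | some y => exact ⟨_, PegRec.choice₁ _ _ _ _ h₁⟩
    | none =>
      obtain ⟨r₂, h₂⟩ := ih₂ x
      exact ⟨_, PegRec.choice₂ _ _ _ _ h₁ h₂⟩

lemma key (m : ℕ) :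
    PegRec gR (.nt true) (rep m) (some (rep m)) ↔ ∃ k, m = 2 ^ k := by
  constructor
  · intro hx
    match m with
    | 0 =>
      have := peg_det hx recP0
      simp at this
    | 1 => exact ⟨0, rfl⟩
    | s + 2 =>
      have hd := peg_det hx (recP2 s)
      injection hd with hd
      have hlen := congrArg List.length hd
      simp [rep] at hlen
      obtain ⟨k, hk⟩ := (hf_fix_iff s).mp (by omega)
      exact ⟨k, by omega⟩
  · rintro ⟨k, hk⟩
    match k, hk with
    | 0, hk => rw [hk]; exact recP1
    | j + 1, hk =>
      have h2 : 2 ≤ m := by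
        rw [hk, pow_succ]
        have : (1:ℕ) ≤ 2 ^ j := Nat.one_le_two_pow
        omega
      obtain ⟨s, rfl⟩ : ∃ s, m = s + 2 := ⟨m - 2, by omega⟩
      have hfix : hf s = s := (hf_fix_iff s).mpr ⟨j + 1, by omega⟩
      have := recP2 s
      rwa [hfix] at this

/-- The PEG recognising `{ a^(2^k) }`. -/
def G2 : PEG Unit := ⟨Bool, inferInstance, gR, true⟩

end PowTwoPEG

theorem powerTwoLength_isPEG' :
    IsPEGLang { x : List Unit | ∃ k : ℕ, x.length = 2 ^ k } := by
  refine ⟨PowTwoPEG.G2, PowTwoPEG.gR_total, ?_⟩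
  ext x
  simp only [PEG.Lang, Set.mem_setOf_eq]
  constructor
  · intro hx
    rw [PowTwoPEG.unit_list x] at hx
    exact (PowTwoPEG.key x.length).mp hx
  · rintro ⟨k, hk⟩
    show PegRec PowTwoPEG.G2.R (.nt PowTwoPEG.G2.S) x (some x)
    rw [PowTwoPEG.unit_list x]
    exact (PowTwoPEG.key x.length).mpr ⟨k, hk⟩

/-- The unary language `P₂ = { aⁿ : n = 2^k for some k ≥ 0 }`
over the one-letter alphabet (`Unit`) is recognised by some total PEG. -/
theorem powerTwoLength_isPEG :
    IsPEGLang { x : List Unit | ∃ k : ℕ, x.length = 2 ^ k } :=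
  powerTwoLength_isPEG'
end

section
/- For every natural number ℓ, the unary language P_ℓ = { a^(ℓ^n) : n ≥ 0 } over the one-letter alphabet {a} is recognised by some total parsing expression grammar; that is, P_ℓ ∈ PEG. -/
/-! For `ℓ = p + 1 ≥ 2` we use the grammar `S ← a !a / a^p A !a`, `A ← a^p A a / &S a`.
On `a^m` with `m = ℓ^k + i·p` and `i < ℓ^k`, the nonterminal `A` strips `a^p` off `i` times,
reaches a suffix of length `ℓ^k`, where `&S a` consumes one letter, and consumes one more letter
on each of the `i` ways back: `1 + i·ℓ` letters in all. This is the whole input exactly when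
`i = ℓ^k - 1`; one step further, at `m = ℓ^(k+1)`, the trailing `a` fails, `&S a` takes over and
the count restarts. So `a^p A !a` accepts `a^m` iff `m - p = ℓ^k + (ℓ^k - 1)·p`, i.e.
`m = ℓ^(k+1)`. Every recursive call is made on a strictly shorter suffix, except `&S` inside `A`,
and `S` itself only calls `A` after consuming `a^p`; so strong induction on the input length
computes both nonterminals, which also gives totality. For `ℓ ≤ 1` the language is `{a}` or
`{ε, a}`. -/

section

variable {α ν : Type} {R : ν → PExp α ν}

theorem PegRec.isPrefix {e : PExp α ν} {x y : List α} (h : PegRec R e x (some y)) :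
    y <+: x := by
  generalize hr : some y = r at h
  induction h generalizing y with
  | seqOk _ _ y₁ _ _ _ _ _ ih₂ =>
    cases hr; exact (List.prefix_append_right_inj y₁).2 (ih₂ rfl)
  | choice₁ _ _ _ _ _ ih | choice₂ _ _ _ _ _ _ _ ih | ntRule _ _ _ _ ih => exact ih hr
  | _ => cases hr <;> simp

theorem PegRec.det {e : PExp α ν} {x : List α} {r₁ r₂ : Option (List α)}
    (h₁ : PegRec R e x r₁) (h₂ : PegRec R e x r₂) : r₁ = r₂ := by
  induction h₁ generalizing r₂ with
  | seqOk _ _ y₁ z _ _ _ ih₁ ih₂ | seqFail₂ _ _ y₁ z _ _ ih₁ ih₂ =>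
    generalize hx : y₁ ++ z = x at h₂
    cases h₂ <;> grind [List.append_cancel_left]
  | _ => cases h₂ <;> grind

theorem PegRec.exists_of_forall_nt (hnt : ∀ A x, ∃ r, PegRec R (.nt A) x r)
    (e : PExp α ν) (x : List α) : ∃ r, PegRec R e x r := by
  induction e generalizing x with
  | eps => exact ⟨_, .eps x⟩
  | fail => exact ⟨_, .fail x⟩
  | term a =>
    rcases x with _ | ⟨b, z⟩
    · exact ⟨_, .termNil a⟩
    · by_cases hab : a = b
      · exact hab ▸ ⟨_, .termOk a z⟩
      · exact ⟨_, .termMismatch a b z hab⟩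
  | nt A => exact hnt A x
  | notP e ih =>
    obtain ⟨_ | y, h⟩ := ih x
    exacts [⟨_, .notFail e x h⟩, ⟨_, .notSucc e x y h⟩]
  | andP e ih =>
    obtain ⟨_ | y, h⟩ := ih x
    exacts [⟨_, .andFail e x h⟩, ⟨_, .andSucc e x y h⟩]
  | seq e₁ e₂ ih₁ ih₂ =>
    obtain ⟨_ | y₁, h₁⟩ := ih₁ x
    · exact ⟨_, .seqFail₁ e₁ e₂ x h₁⟩
    obtain ⟨z, rfl⟩ := h₁.isPrefix
    obtain ⟨_ | y₂, h₂⟩ := ih₂ z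
    exacts [⟨_, .seqFail₂ e₁ e₂ y₁ z h₁ h₂⟩,
      ⟨_, .seqOk e₁ e₂ y₁ z y₂ h₁ h₂⟩]
  | choice e₁ e₂ ih₁ ih₂ =>
    obtain ⟨_ | y, h₁⟩ := ih₁ x
    · obtain ⟨r, h₂⟩ := ih₂ x
      exact ⟨_, .choice₂ e₁ e₂ x r h₁ h₂⟩
    · exact ⟨_, .choice₁ e₁ e₂ x y h₁⟩

end

open List

def UnaryRec {ν : Type} (R : ν → PExp Unit ν) (e : PExp Unit ν) (m : ℕ) (o : Option ℕ) :
    Prop :=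
  PegRec R e (replicate m ()) (o.map (replicate · ()))

def PExp.afterTerms {ν : Type} : ℕ → PExp Unit ν → PExp Unit ν
  | 0, e => e
  | j + 1, e => .seq (.term ()) (afterTerms j e)

def PExp.lastTerm {ν : Type} : PExp Unit ν := .seq (.term ()) (.notP (.term ()))

namespace UnaryRec

variable {ν : Type} {R : ν → PExp Unit ν} {e e₁ e₂ : PExp Unit ν} {m k : ℕ}
  {o : Option ℕ}

theorem le (h : UnaryRec R e m (some k)) : k ≤ m := by
  simpa using (PegRec.isPrefix h).length_le

theorem eps : UnaryRec R .eps m (some 0) := PegRec.eps _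

theorem term_zero : UnaryRec R (.term ()) 0 none := .termNil ()

theorem term_succ : UnaryRec R (.term ()) (m + 1) (some 1) := .termOk () _

theorem nt {A : ν} (h : UnaryRec R (R A) m o) : UnaryRec R (.nt A) m o := .ntRule _ _ _ h

theorem notP_of_none (h : UnaryRec R e m none) : UnaryRec R (.notP e) m (some 0) :=
  .notFail _ _ h

theorem notP_of_some (h : UnaryRec R e m (some k)) : UnaryRec R (.notP e) m none :=
  .notSucc _ _ _ h

theorem andP_of_none (h : UnaryRec R e m none) : UnaryRec R (.andP e) m none := .andFail _ _ h

theorem andP_of_some (h : UnaryRec R e m (some k)) : UnaryRec R (.andP e) m (some 0) :=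
  .andSucc _ _ _ h

theorem choice_of_some (h : UnaryRec R e₁ m (some k)) :
    UnaryRec R (.choice e₁ e₂) m (some k) :=
  .choice₁ _ _ _ _ h

theorem choice_of_none (h₁ : UnaryRec R e₁ m none) (h₂ : UnaryRec R e₂ m o) :
    UnaryRec R (.choice e₁ e₂) m o :=
  .choice₂ _ _ _ _ h₁ h₂

theorem seq_of_none (h : UnaryRec R e₁ m none) : UnaryRec R (.seq e₁ e₂) m none :=
  .seqFail₁ _ _ _ h

theorem seq_of_some (h₁ : UnaryRec R e₁ m (some k)) (h₂ : UnaryRec R e₂ (m - k) o) :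
    UnaryRec R (.seq e₁ e₂) m (o.map (k + ·)) := by
  have hsplit : replicate m () = replicate k () ++ replicate (m - k) () := by
    rw [← replicate_add, Nat.add_sub_cancel' h₁.le]
  unfold UnaryRec at *
  rw [hsplit] at h₁ ⊢
  cases o with
  | none => exact .seqFail₂ _ _ _ _ h₁ h₂
  | some j =>
    simp only [Option.map_some, replicate_add]
    exact .seqOk _ _ _ _ _ h₁ h₂

theorem seq_of_some_of_eq {j : ℕ} (h₁ : UnaryRec R e₁ m (some k)) (hj : m - k = j)
    (h₂ : UnaryRec R e₂ j o) : UnaryRec R (.seq e₁ e₂) m (o.map (k + ·)) :=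
  seq_of_some h₁ (hj ▸ h₂)

theorem lastTerm (m : ℕ) : UnaryRec R .lastTerm m (if m = 1 then some 1 else none) := by
  match m with
  | 0 => exact seq_of_none term_zero
  | 1 => exact seq_of_some term_succ (notP_of_none term_zero)
  | m + 2 => exact seq_of_some (o := none) term_succ (notP_of_some (m := m + 1) (k := 1) term_succ)

theorem seq_notP_term (h : UnaryRec R e m o) :
    UnaryRec R (.seq e (.notP (.term ()))) m (if o = some m then some m else none) := by
  rcases o with _ | k
  · exact seq_of_none h
  obtain rfl | hkm := h.le.eq_or_lt
  · simpa using seq_of_some_of_eq h (Nat.sub_self k) (notP_of_none term_zero)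
  · obtain ⟨j, hj⟩ := Nat.exists_eq_add_one_of_ne_zero (Nat.sub_ne_zero_of_lt hkm)
    simpa [hkm.ne] using seq_of_some_of_eq h hj (notP_of_some (k := 1) term_succ)

theorem seq_term (h : UnaryRec R e m o) :
    UnaryRec R (.seq e (.term ())) m (o.bind fun k => if k < m then some (k + 1) else none) := by
  rcases o with _ | k
  · exact seq_of_none h
  obtain rfl | hkm := h.le.eq_or_lt
  · simpa using seq_of_some_of_eq h (Nat.sub_self k) term_zero
  · obtain ⟨j, hj⟩ := Nat.exists_eq_add_one_of_ne_zero (Nat.sub_ne_zero_of_lt hkm)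
    simpa [hkm] using seq_of_some_of_eq h hj term_succ

theorem andP_term_of_some (h : UnaryRec R e (m + 1) (some k)) :
    UnaryRec R (.seq (.andP e) (.term ())) (m + 1) (some 1) :=
  seq_of_some (andP_of_some h) term_succ

theorem andP_term_of_none (h : UnaryRec R e m none) :
    UnaryRec R (.seq (.andP e) (.term ())) m none :=
  seq_of_none (andP_of_none h)

theorem afterTerms (j : ℕ) (h : UnaryRec R e m o) :
    UnaryRec R (e.afterTerms j) (j + m) (o.map (j + ·)) := by
  induction j with
  | zero => simpa [PExp.afterTerms] using h
  | succ j ih =>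
    have := seq_of_some_of_eq (e₂ := e.afterTerms j) (term_succ (m := j + m)) (by omega) ih
    have hshift : (1 + ·) ∘ (j + ·) = (j + 1 + ·) := by
      funext x; simp only [Function.comp]; omega
    rw [Option.map_map, hshift] at this
    rwa [show j + 1 + m = j + m + 1 by omega]

theorem afterTerms_of_lt {j : ℕ} (h : m < j) : UnaryRec R (e.afterTerms j) m none := by
  induction j generalizing m with
  | zero => omega
  | succ j ih =>
    rcases m with _ | m
    · exact seq_of_none term_zero
    · exact seq_of_some term_succ (ih (by omega))

end UnaryRec

theorem exists_eq_replicate_unit (x : List Unit) : ∃ m, x = replicate m () :=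
  ⟨x.length, eq_replicate_of_mem fun _ _ => rfl⟩

theorem isPEGLang_of_unaryRec {ν : Type} [Finite ν] (R : ν → PExp Unit ν) (S : ν)
    (len : ν → ℕ → Option ℕ) (hlen : ∀ A m, UnaryRec R (.nt A) m (len A m)) (L : Set ℕ)
    (hL : ∀ m, len S m = some m ↔ m ∈ L) : IsPEGLang {x : List Unit | x.length ∈ L} := by
  refine ⟨⟨ν, ‹_›, R, S⟩, PegRec.exists_of_forall_nt fun A x => ?_, ?_⟩
  · obtain ⟨m, rfl⟩ := exists_eq_replicate_unit x
    exact ⟨_, hlen A m⟩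
  · ext x
    obtain ⟨m, rfl⟩ := exists_eq_replicate_unit x
    change PegRec R (.nt S) (replicate m ()) (some (replicate m ())) ↔
      (replicate m ()).length ∈ L
    rw [length_replicate, ← hL]
    refine ⟨fun h => ?_, fun h => by simpa [UnaryRec, h] using hlen S m⟩
    obtain ⟨k, hk, hkm⟩ := Option.map_eq_some_iff.1 ((hlen S m).det h)
    rwa [replicate_left_inj.1 hkm] at hk

theorem isPEGLang_length_eq_one : IsPEGLang {x : List Unit | x.length = 1} :=
  isPEGLang_of_unaryRec (fun _ : Unit => .lastTerm) () (fun _ m => if m = 1 then some 1 else none)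
    (fun _ m => .nt (.lastTerm m)) {1} (fun m => by split_ifs <;> simp_all)

theorem isPEGLang_length_le_one : IsPEGLang {x : List Unit | x.length ≤ 1} := by
  refine isPEGLang_of_unaryRec (fun _ : Unit => .choice .lastTerm .eps) ()
    (fun _ m => if m = 1 then some 1 else some 0) (fun _ m => .nt ?_) {m | m ≤ 1}
    (fun m => by split_ifs <;> simp only [Option.some_inj, Set.mem_ofPred_eq] <;> omega)
  by_cases h : m = 1
  · subst h; exact .choice_of_some (by simpa using UnaryRec.lastTerm 1)
  · simpa [h] using .choice_of_none (by simpa [h] using UnaryRec.lastTerm m) .eps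

namespace PowerGrammar

variable (n : ℕ)

/-- The grammar for `ℓ = n + 2`, with `S = true` and `A = false`. -/
def rules : Bool → PExp Unit Bool
  | true => .choice .lastTerm ((PExp.seq (.nt false) (.notP (.term ()))).afterTerms (n + 1))
  | false => .choice ((PExp.seq (.nt false) (.term ())).afterTerms (n + 1))
      (.seq (.andP (.nt true)) (.term ()))

/-- The length `A` consumes on `a^m`, computed along the rule of `A`. -/
def auxLen (m : ℕ) : Option ℕ :=
  if n + 1 ≤ m then
    match auxLen (m - (n + 1)) with
    -- `k ≥ m - (n + 1)` means that the inner `A` consumed everything, and then `&S` succeeds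
    | some k => some (if k < m - (n + 1) then k + (n + 2) else 1)
    | none => if m = 1 then some 1 else none
  else if m = 1 then some 1 else none
decreasing_by omega

def startLen (m : ℕ) : Option ℕ :=
  if m = 1 ∨ (n + 1 ≤ m ∧ auxLen n (m - (n + 1)) = some (m - (n + 1))) then some m else none

variable {n} {m : ℕ}

theorem auxLen_of_lt (h : m < n + 1) : auxLen n m = if m = 1 then some 1 else none := by
  rw [auxLen, if_neg (by omega)]

theorem auxLen_add_of_none {j : ℕ} (h : auxLen n j = none) :
    auxLen n (n + 1 + j) = if n + 1 + j = 1 then some 1 else none := by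
  rw [auxLen, if_pos (by omega), Nat.add_sub_cancel_left, h]

theorem auxLen_add_of_some {j k : ℕ} (h : auxLen n j = some k) :
    auxLen n (n + 1 + j) = some (if k < j then k + (n + 2) else 1) := by
  rw [auxLen, if_pos (by omega), Nat.add_sub_cancel_left, h]

theorem unaryRec_start (ih : ∀ j < m, UnaryRec (rules n) (.nt false) j (auxLen n j)) :
    UnaryRec (rules n) (.nt true) m (startLen n m) := by
  refine .nt ?_
  by_cases h1 : m = 1
  · subst h1
    rw [show startLen n 1 = some 1 by simp [startLen]]
    exact .choice_of_some (by simpa using UnaryRec.lastTerm (R := rules n) 1)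
  refine .choice_of_none (by simpa [h1] using UnaryRec.lastTerm (R := rules n) m) ?_
  by_cases hm : n + 1 ≤ m
  · obtain ⟨j, rfl⟩ := Nat.exists_eq_add_of_le hm
    convert (UnaryRec.seq_notP_term (ih j (by omega))).afterTerms (n + 1) using 1
    simp only [startLen, h1, false_or, Nat.add_sub_cancel_left, hm, true_and]
    split_ifs <;> simp
  · simpa [startLen, h1, hm] using UnaryRec.afterTerms_of_lt (by omega)

theorem unaryRec_fallback (hS : UnaryRec (rules n) (.nt true) m (startLen n m)) :
    UnaryRec (rules n) (.seq (.andP (.nt true)) (.term ())) m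
      ((startLen n m).map fun _ => 1) := by
  unfold startLen at hS ⊢
  split_ifs at hS ⊢ with h
  · obtain ⟨m, rfl⟩ : ∃ m', m = m' + 1 := ⟨m - 1, by omega⟩
    exact UnaryRec.andP_term_of_some hS
  · exact UnaryRec.andP_term_of_none hS

theorem unaryRec_aux (ih : ∀ j < m, UnaryRec (rules n) (.nt false) j (auxLen n j))
    (hS : UnaryRec (rules n) (.nt true) m (startLen n m)) :
    UnaryRec (rules n) (.nt false) m (auxLen n m) := by
  refine .nt ?_
  have hfallback := unaryRec_fallback hS
  by_cases hm : n + 1 ≤ m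
  · obtain ⟨j, rfl⟩ := Nat.exists_eq_add_of_le hm
    have hj := ih j (by omega)
    have hfirst := (UnaryRec.seq_term hj).afterTerms (n + 1)
    rcases hk : auxLen n j with _ | k
    · have hval : auxLen n (n + 1 + j) = (startLen n (n + 1 + j)).map fun _ => 1 := by
        rw [auxLen_add_of_none hk]; simp [startLen, hk]
      rw [hval]
      exact .choice_of_none (by simpa [hk] using hfirst) hfallback
    rw [hk] at hj
    obtain hkj | rfl := hj.le.lt_or_eq
    · have hval : auxLen n (n + 1 + j) = some (n + 1 + (k + 1)) := by
        rw [auxLen_add_of_some hk, if_pos hkj]; congr 1; omega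
      rw [hval]
      exact .choice_of_some (by simpa [hk, hkj] using hfirst)
    · have hval : auxLen n (n + 1 + k) = (startLen n (n + 1 + k)).map fun _ => 1 := by
        rw [auxLen_add_of_some hk, if_neg (lt_irrefl k)]; simp [startLen, hk]
      rw [hval]
      exact .choice_of_none (by simpa [hk] using hfirst) hfallback
  · have hval : auxLen n m = (startLen n m).map fun _ => 1 := by
      rw [auxLen_of_lt (by omega)]; simp [startLen, hm]
    rw [hval]
    exact .choice_of_none (UnaryRec.afterTerms_of_lt (by omega)) hfallback

theorem unaryRec_rules (A : Bool) (m : ℕ) :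
    UnaryRec (rules n) (.nt A) m (if A then startLen n m else auxLen n m) := by
  induction m using Nat.strong_induction_on generalizing A with
  | _ m ih =>
    have ihA : ∀ j < m, UnaryRec (rules n) (.nt false) j (auxLen n j) :=
      fun j hj => ih j hj false
    cases A
    · exact unaryRec_aux ihA (unaryRec_start ihA)
    · exact unaryRec_start ihA

theorem auxLen_one : auxLen n 1 = some 1 := by
  rcases n with _ | n
  · exact auxLen_add_of_none (n := 0) (j := 0) (by rw [auxLen_of_lt (by omega)]; simp)
  · rw [auxLen_of_lt (by omega), if_pos rfl]

theorem auxLen_pow_add (k : ℕ) {i : ℕ} (hi : i < (n + 2) ^ k) :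
    auxLen n ((n + 2) ^ k + i * (n + 1)) = some (1 + i * (n + 2)) := by
  induction k generalizing i with
  | zero => simp_all [auxLen_one]
  | succ k ihk =>
    induction i with
    | zero =>
      obtain ⟨t, ht⟩ : ∃ t, (n + 2) ^ k = t + 1 :=
        Nat.exists_eq_add_one_of_ne_zero (by positivity)
      have hfull := ihk (i := t) (by omega)
      rw [ht, show t + 1 + t * (n + 1) = 1 + t * (n + 2) by ring] at hfull
      have hsplit : (n + 2) ^ (k + 1) + 0 * (n + 1) = n + 1 + (1 + t * (n + 2)) := by
        rw [pow_succ, ht]; ring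
      rw [hsplit, auxLen_add_of_some hfull]
      simp
    | succ i ihi =>
      have hsplit : (n + 2) ^ (k + 1) + (i + 1) * (n + 1) =
          n + 1 + ((n + 2) ^ (k + 1) + i * (n + 1)) := by ring
      have : i * (n + 2) = i * (n + 1) + i := by ring
      rw [hsplit, auxLen_add_of_some (ihi (by omega)), if_pos (by omega)]
      congr 1; ring

theorem exists_pow_add_of_auxLen_eq_some {v : ℕ} (h : auxLen n m = some v) :
    ∃ k i, i < (n + 2) ^ k ∧ m = (n + 2) ^ k + i * (n + 1) ∧ v = 1 + i * (n + 2) := by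
  induction m using Nat.strong_induction_on generalizing v with
  | _ m ih =>
    by_cases hm : n + 1 ≤ m
    swap
    · rw [auxLen_of_lt (by omega)] at h
      split_ifs at h with h1
      cases h; exact ⟨0, 0, by simp, by simpa using h1, by simp⟩
    obtain ⟨j, rfl⟩ := Nat.exists_eq_add_of_le hm
    rcases hj : auxLen n j with _ | k'
    · rw [auxLen_add_of_none hj] at h
      split_ifs at h with h1
      cases h; exact ⟨0, 0, by simp, by simpa using h1, by simp⟩
    obtain ⟨K, i, hi, rfl, rfl⟩ := ih _ (by omega) hj
    rw [auxLen_add_of_some hj] at h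
    have : i * (n + 2) = i * (n + 1) + i := by ring
    split_ifs at h with hlt <;> cases h
    · exact ⟨K, i + 1, by omega, by ring, by ring⟩
    · have hK : (n + 2) ^ K = i + 1 := by omega
      refine ⟨K + 1, 0, by positivity, ?_, by ring⟩
      rw [pow_succ, hK]; ring

theorem startLen_eq_some_iff : startLen n m = some m ↔ ∃ k, m = (n + 2) ^ k := by
  have hstart : startLen n m = some m ↔
      m = 1 ∨ (n + 1 ≤ m ∧ auxLen n (m - (n + 1)) = some (m - (n + 1))) := by
    unfold startLen; split_ifs <;> simp_all
  rw [hstart]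
  constructor
  · rintro (rfl | ⟨hm, hfull⟩)
    · exact ⟨0, rfl⟩
    obtain ⟨j, rfl⟩ := Nat.exists_eq_add_of_le hm
    rw [Nat.add_sub_cancel_left] at hfull
    obtain ⟨k, i, -, hj, rfl⟩ := exists_pow_add_of_auxLen_eq_some hfull
    have : i * (n + 2) = i * (n + 1) + i := by ring
    refine ⟨k + 1, ?_⟩
    rw [pow_succ, show (n + 2) ^ k = i + 1 by omega]
    ring
  · rintro ⟨_ | k, rfl⟩
    · exact Or.inl rfl
    obtain ⟨t, ht⟩ : ∃ t, (n + 2) ^ k = t + 1 :=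
      Nat.exists_eq_add_one_of_ne_zero (by positivity)
    have hsplit : (n + 2) ^ (k + 1) = n + 1 + ((n + 2) ^ k + t * (n + 1)) := by
      rw [pow_succ, ht]; ring
    rw [hsplit, Nat.add_sub_cancel_left, auxLen_pow_add k (by omega), ht]
    exact Or.inr ⟨by omega, by ring_nf⟩

end PowerGrammar

open PowerGrammar in
theorem isPEGLang_length_eq_pow_add_two (n : ℕ) :
    IsPEGLang {x : List Unit | ∃ k, x.length = (n + 2) ^ k} :=
  isPEGLang_of_unaryRec (rules n) true (fun A m => if A then startLen n m else auxLen n m)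
    unaryRec_rules {m | ∃ k, m = (n + 2) ^ k} fun _ => startLen_eq_some_iff

/-- For every natural number `ℓ`, the unary language
`P_ℓ = { a^(ℓ^n) : n ≥ 0 }` over the one-letter alphabet (`Unit`)
is recognised by some total PEG. -/
theorem powerLLength_isPEG (ℓ : ℕ) :
    IsPEGLang { x : List Unit | ∃ n : ℕ, x.length = ℓ ^ n } := by
  rcases ℓ with _ | _ | n
  · convert isPEGLang_length_le_one using 3 with x
    constructor
    · rintro ⟨_ | k, hk⟩ <;> simp [hk]
    · intro h
      interval_cases hx : x.length
      exacts [⟨1, rfl⟩, ⟨0, rfl⟩]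
  · simpa using isPEGLang_length_eq_one
  · exact isPEGLang_length_eq_pow_add_two n
end

section
/- The language of binary palindromes of power-of-two length, SP = { w·wʳ : w ∈ {0,1}^(2^n), n ≥ 0 }, over the alphabet {0,1}, is recognised by some total parsing expression grammar; that is, SP ∈ PEG. -/
section Aux
variable {α ν : Type} {R : ν → PExp α ν}

theorem eps_inv {x : List α} {r} (h : PegRec R .eps x r) : r = some [] := by
  cases h; rfl

theorem fail_inv {x : List α} {r} (h : PegRec R .fail x r) : r = none := by
  cases h; rfl

theorem nt_inv {A x r} (h : PegRec R (.nt A) x r) : PegRec R (R A) x r := by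
  cases h; assumption

theorem term_some_inv {a : α} {x y} (h : PegRec R (.term a) x (some y)) :
    y = [a] ∧ ∃ z, x = a :: z := by
  cases h with
  | termOk _ z => exact ⟨rfl, z, rfl⟩

theorem term_none_inv {a : α} {x} (h : PegRec R (.term a) x none) :
    x = [] ∨ ∃ b z, x = b :: z ∧ a ≠ b := by
  cases h with
  | termMismatch a b z hab => exact Or.inr ⟨b, z, rfl, hab⟩
  | termNil => exact Or.inl rfl

theorem notP_some_inv {e : PExp α ν} {x y} (h : PegRec R (.notP e) x (some y)) :
    y = [] ∧ PegRec R e x none := by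
  cases h with
  | notFail _ _ h => exact ⟨rfl, h⟩

theorem notP_none_inv {e : PExp α ν} {x} (h : PegRec R (.notP e) x none) :
    ∃ y, PegRec R e x (some y) := by
  cases h with
  | notSucc _ _ y h => exact ⟨y, h⟩

theorem andP_some_inv {e : PExp α ν} {x y} (h : PegRec R (.andP e) x (some y)) :
    y = [] ∧ ∃ w, PegRec R e x (some w) := by
  cases h with
  | andSucc _ _ w h => exact ⟨rfl, w, h⟩

theorem andP_none_inv {e : PExp α ν} {x} (h : PegRec R (.andP e) x none) :
    PegRec R e x none := by
  cases h; assumption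

theorem seq_some_inv {e₁ e₂ : PExp α ν} {x y} (h : PegRec R (.seq e₁ e₂) x (some y)) :
    ∃ y₁ z y₂, x = y₁ ++ z ∧ y = y₁ ++ y₂ ∧
      PegRec R e₁ x (some y₁) ∧ PegRec R e₂ z (some y₂) := by
  cases h with
  | seqOk _ _ y₁ z y₂ h₁ h₂ => exact ⟨y₁, z, y₂, rfl, rfl, h₁, h₂⟩

theorem seq_none_inv {e₁ e₂ : PExp α ν} {x} (h : PegRec R (.seq e₁ e₂) x none) :
    PegRec R e₁ x none ∨
      ∃ y₁ z, x = y₁ ++ z ∧ PegRec R e₁ x (some y₁) ∧ PegRec R e₂ z none := by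
  cases h with
  | seqFail₁ _ _ _ h₁ => exact Or.inl h₁
  | seqFail₂ _ _ y₁ z h₁ h₂ => exact Or.inr ⟨y₁, z, rfl, h₁, h₂⟩

theorem choice_some_inv {e₁ e₂ : PExp α ν} {x y} (h : PegRec R (.choice e₁ e₂) x (some y)) :
    PegRec R e₁ x (some y) ∨ (PegRec R e₁ x none ∧ PegRec R e₂ x (some y)) := by
  cases h with
  | choice₁ _ _ _ _ h => exact Or.inl h
  | choice₂ _ _ _ _ h₁ h₂ => exact Or.inr ⟨h₁, h₂⟩

theorem choice_none_inv {e₁ e₂ : PExp α ν} {x} (h : PegRec R (.choice e₁ e₂) x none) :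
    PegRec R e₁ x none ∧ PegRec R e₂ x none := by
  cases h with
  | choice₂ _ _ _ _ h₁ h₂ => exact ⟨h₁, h₂⟩

theorem peg_prefix {e : PExp α ν} {x r} (h : PegRec R e x r) :
    ∀ y, r = some y → ∃ z, x = y ++ z := by
  induction h with
  | eps x => intro y hy; injection hy with hy; subst hy; exact ⟨x, by simp⟩
  | fail => intro y hy; simp at hy
  | termOk a z => intro y hy; injection hy with hy; subst hy; exact ⟨z, by simp⟩
  | termMismatch => intro y hy; simp at hy
  | termNil => intro y hy; simp at hy
  | notFail e x _ => intro y hy; injection hy with hy; subst hy; exact ⟨x, by simp⟩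
  | notSucc => intro y hy; simp at hy
  | andSucc e x w _ => intro y hy; injection hy with hy; subst hy; exact ⟨x, by simp⟩
  | andFail => intro y hy; simp at hy
  | seqOk e₁ e₂ y₁ z y₂ h₁ h₂ ih₁ ih₂ =>
      intro y hy; injection hy with hy; subst hy
      obtain ⟨z₂, hz⟩ := ih₂ y₂ rfl
      exact ⟨z₂, by rw [hz, List.append_assoc]⟩
  | seqFail₁ => intro y hy; simp at hy
  | seqFail₂ => intro y hy; simp at hy
  | choice₁ _ _ _ _ _ ih => exact ih
  | choice₂ _ _ _ _ _ _ _ ih₂ => exact ih₂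
  | ntRule _ _ _ _ ih => exact ih

theorem peg_prefix' {e : PExp α ν} {x y} (h : PegRec R e x (some y)) :
    ∃ z, x = y ++ z := peg_prefix h y rfl

theorem peg_det {e : PExp α ν} {x r₁} (h₁ : PegRec R e x r₁) :
    ∀ {r₂}, PegRec R e x r₂ → r₁ = r₂ := by
  induction h₁ with
  | eps => intro r₂ h₂; exact (eps_inv h₂).symm
  | fail => intro r₂ h₂; exact (fail_inv h₂).symm
  | termOk a z =>
      intro r₂ h₂
      cases r₂ with
      | some y => obtain ⟨rfl, _⟩ := term_some_inv h₂; rfl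
      | none =>
          rcases term_none_inv h₂ with h | ⟨b, z', hz, hab⟩
          · simp at h
          · injection hz with h1 _; exact absurd h1 hab
  | termMismatch a b z hab =>
      intro r₂ h₂
      cases r₂ with
      | some y =>
          obtain ⟨_, z', hz⟩ := term_some_inv h₂
          injection hz with h1 _; exact absurd h1.symm hab
      | none => rfl
  | termNil a =>
      intro r₂ h₂
      cases r₂ with
      | some y => obtain ⟨_, z', hz⟩ := term_some_inv h₂; simp at hz
      | none => rfl
  | notFail e x h ih =>
      intro r₂ h₂
      cases r₂ with
      | some y => obtain ⟨rfl, _⟩ := notP_some_inv h₂; rfl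
      | none =>
          obtain ⟨y, hy⟩ := notP_none_inv h₂
          have := ih hy; simp at this
  | notSucc e x y h ih =>
      intro r₂ h₂
      cases r₂ with
      | some y' =>
          obtain ⟨_, hn⟩ := notP_some_inv h₂
          have := ih hn; simp at this
      | none => rfl
  | andSucc e x w h ih =>
      intro r₂ h₂
      cases r₂ with
      | some y' => obtain ⟨rfl, _⟩ := andP_some_inv h₂; rfl
      | none =>
          have := ih (andP_none_inv h₂); simp at this
  | andFail e x h ih =>
      intro r₂ h₂
      cases r₂ with
      | some y' =>
          obtain ⟨_, w, hw⟩ := andP_some_inv h₂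
          have := ih hw; simp at this
      | none => rfl
  | seqOk e₁ e₂ y₁ z y₂ h₁ h₂ ih₁ ih₂ =>
      intro r₂ hh
      cases r₂ with
      | some y =>
          obtain ⟨y₁', z', y₂', hx, hy, hh₁, hh₂⟩ := seq_some_inv hh
          have e1 := ih₁ hh₁; injection e1 with e1; subst e1
          have hz : z = z' := List.append_cancel_left hx
          subst hz
          have e2 := ih₂ hh₂; injection e2 with e2
          rw [hy, e2]
      | none =>
          rcases seq_none_inv hh with h | ⟨y₁', z', hx, hs, hn⟩
          · have := ih₁ h; simp at this
          · have e1 := ih₁ hs; injection e1 with e1; subst e1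
            have hz : z = z' := List.append_cancel_left hx
            subst hz
            have := ih₂ hn; simp at this
  | seqFail₁ e₁ e₂ x h ih =>
      intro r₂ hh
      cases r₂ with
      | some y =>
          obtain ⟨y₁', z', y₂', hx, hy, hh₁, hh₂⟩ := seq_some_inv hh
          have := ih hh₁; simp at this
      | none => rfl
  | seqFail₂ e₁ e₂ y₁ z h₁ h₂ ih₁ ih₂ =>
      intro r₂ hh
      cases r₂ with
      | some y =>
          obtain ⟨y₁', z', y₂', hx, hy, hh₁, hh₂⟩ := seq_some_inv hh
          have e1 := ih₁ hh₁; injection e1 with e1; subst e1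
          have hz : z = z' := List.append_cancel_left hx
          subst hz
          have := ih₂ hh₂; simp at this
      | none => rfl
  | choice₁ e₁ e₂ x y h ih =>
      intro r₂ hh
      cases r₂ with
      | some y' =>
          rcases choice_some_inv hh with h' | ⟨hn, _⟩
          · exact ih h'
          · have := ih hn; simp at this
      | none =>
          have := ih (choice_none_inv hh).1; simp at this
  | choice₂ e₁ e₂ x r h₁ h₂ ih₁ ih₂ =>
      intro r₂ hh
      cases r₂ with
      | some y' =>
          rcases choice_some_inv hh with h' | ⟨_, hs⟩
          · have := ih₁ h'; simp at this
          · exact ih₂ hs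
      | none => exact ih₂ (choice_none_inv hh).2
  | ntRule A x r h ih => intro r₂ hh; exact ih (nt_inv hh)

theorem seqOk' {e₁ e₂ : PExp α ν} {x y₁ z y₂ y}
    (hx : x = y₁ ++ z) (hy : y = y₁ ++ y₂)
    (h₁ : PegRec R e₁ x (some y₁)) (h₂ : PegRec R e₂ z (some y₂)) :
    PegRec R (.seq e₁ e₂) x (some y) := by
  subst hx; subst hy; exact .seqOk _ _ _ _ _ h₁ h₂

theorem seqFail₂' {e₁ e₂ : PExp α ν} {x y₁ z} (hx : x = y₁ ++ z)
    (h₁ : PegRec R e₁ x (some y₁)) (h₂ : PegRec R e₂ z none) :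
    PegRec R (.seq e₁ e₂) x none := by
  subst hx; exact .seqFail₂ _ _ _ _ h₁ h₂

end Aux

/-! ### The grammar for sometimes-palindromes -/

inductive SPNT : Type | S | W | Q | D
  deriving DecidableEq

instance : Finite SPNT :=
  Finite.of_injective
    (fun A => match A with
      | .S => (0 : Fin 4) | .W => 1 | .Q => 2 | .D => 3)
    (by intro a b; cases a <;> cases b <;> decide)

/-- `.` : any single character. -/
def anyB : PExp Bool SPNT := .choice (.term false) (.term true)

/-- `a W a` -/
def pA (a : Bool) : PExp Bool SPNT := .seq (.term a) (.seq (.nt .W) (.term a))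

def Rul : SPNT → PExp Bool SPNT
  | .S => .seq (.choice (pA false) (pA true)) (.notP anyB)
  | .W => .choice (.andP (.nt .Q)) (.choice (pA false) (pA true))
  | .Q => .choice (.seq anyB (.notP anyB))
           (.seq anyB (.seq (.nt .D) (.seq anyB (.notP anyB))))
  | .D => .choice (.andP (.nt .Q)) (.seq anyB (.seq (.nt .D) anyB))

abbrev PR : PExp Bool SPNT → List Bool → Option (List Bool) → Prop := PegRec Rul

theorem mkS {x r} (h : PR (Rul .S) x r) : PR (.nt .S) x r := .ntRule _ _ _ h
theorem mkW {x r} (h : PR (Rul .W) x r) : PR (.nt .W) x r := .ntRule _ _ _ h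
theorem mkQ {x r} (h : PR (Rul .Q) x r) : PR (.nt .Q) x r := .ntRule _ _ _ h
theorem mkD {x r} (h : PR (Rul .D) x r) : PR (.nt .D) x r := .ntRule _ _ _ h

theorem any_cons (a : Bool) (z : List Bool) : PR anyB (a :: z) (some [a]) := by
  cases a
  · exact .choice₁ _ _ _ _ (.termOk _ _)
  · exact .choice₂ _ _ _ _ (.termMismatch _ _ _ (by simp)) (.termOk _ _)

theorem any_nil : PR anyB [] none := .choice₂ _ _ _ _ (.termNil _) (.termNil _)

theorem notAny_nil : PR (.notP anyB) [] (some []) := .notFail _ _ any_nil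

theorem notAny_cons (a : Bool) (z : List Bool) : PR (.notP anyB) (a :: z) none :=
  .notSucc _ _ _ (any_cons a z)

theorem any_none_inv {x : List Bool} (h : PR anyB x none) : x = [] := by
  cases x with
  | nil => rfl
  | cons a z => exact absurd (peg_det (any_cons a z) h) (by simp)

/-! ### Powers of two -/

def Pow2 (n : ℕ) : Prop := ∃ k, n = 2 ^ k

theorem pow2_one : Pow2 1 := ⟨0, rfl⟩

theorem not_pow2_zero : ¬ Pow2 0 := by
  rintro ⟨k, hk⟩
  have := Nat.two_pow_pos k
  omega

theorem not_pow2_between {k n : ℕ} (h1 : 2^k < n) (h2 : n < 2^(k+1)) : ¬ Pow2 n := by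
  rintro ⟨j, rfl⟩
  have hj1 : k < j := (Nat.pow_lt_pow_iff_right (by norm_num)).mp h1
  have hj2 : j < k + 1 := (Nat.pow_lt_pow_iff_right (by norm_num)).mp h2
  omega

theorem pow2_bracket {n : ℕ} (h : n ≠ 0) : ∃ k, 2^k ≤ n ∧ n < 2^(k+1) :=
  ⟨Nat.log 2 n, Nat.pow_log_le_self 2 h, Nat.lt_pow_succ_log_self (by norm_num) n⟩

theorem list_len2 {l : List Bool} (h : 2 ≤ l.length) : ∃ c d z, l = c :: d :: z := by
  cases l with
  | nil => simp at h
  | cons c l' =>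
    cases l' with
    | nil => simp at h
    | cons d z => exact ⟨c, d, z, rfl⟩

/-! ### Characterisation of `Q` (tests whether the suffix length is a power of two)
and its auxiliary `D`. -/

theorem QD_char : ∀ n (x : List Bool), x.length = n →
    (Pow2 n → PR (.nt .Q) x (some x)) ∧
    (¬ Pow2 n → PR (.nt .Q) x none) ∧
    (∀ k, 2^k ≤ n → n < 2^(k+1) → PR (.nt .D) x (some (x.take (2*(n - 2^k))))) ∧
    (n = 0 → PR (.nt .D) x none) := by
  intro n
  induction n using Nat.strong_induction_on with
  | _ n IH =>
  intro x hx
  have hQs : Pow2 n → PR (.nt .Q) x (some x) := by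
    rintro ⟨k, hk⟩
    cases k with
    | zero =>
      norm_num at hk
      have hx1 : x.length = 1 := by omega
      obtain ⟨a, rfl⟩ := List.length_eq_one_iff.mp hx1
      have h1 : PR (.seq anyB (.notP anyB)) [a] (some [a]) :=
        seqOk' (y₁ := [a]) (z := []) (by simp) (by simp) (any_cons a []) notAny_nil
      exact mkQ (.choice₁ _ _ _ _ h1)
    | succ kk =>
      have hps : (2:ℕ)^(kk+1) = 2^kk * 2 := pow_succ 2 kk
      have hpp := Nat.two_pow_pos kk
      obtain ⟨a, b, x'', rfl⟩ := list_len2 (l := x) (by omega)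
      have hlen'' : x''.length + 2 = n := by simpa using hx
      have halt1 : PR (.seq anyB (.notP anyB)) (a :: b :: x'') none :=
        seqFail₂' (y₁ := [a]) (z := b :: x'') rfl (any_cons _ _) (notAny_cons _ _)
      have hD := (IH (n-1) (by omega) (b :: x'') (by simp; omega)).2.2.1 kk
        (by omega) (by omega)
      have hm' : 2*((n-1) - 2^kk) = n - 2 := by omega
      rw [hm'] at hD
      have hdl : ((b :: x'').drop (n-2)).length = 1 := by simp; omega
      obtain ⟨c, hc⟩ := List.length_eq_one_iff.mp hdl
      have hsplit : b :: x'' = (b :: x'').take (n-2) ++ [c] := by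
        conv_lhs => rw [← List.take_append_drop (n-2) (b :: x'')]
        rw [hc]
      have htail : PR (.seq anyB (.notP anyB)) [c] (some [c]) :=
        seqOk' (y₁ := [c]) (z := []) (by simp) (by simp) (any_cons c []) notAny_nil
      have hmid : PR (.seq (.nt .D) (.seq anyB (.notP anyB))) (b :: x'')
          (some ((b :: x'').take (n-2) ++ [c])) :=
        seqOk' hsplit rfl hD htail
      have halt2 : PR (.seq anyB (.seq (.nt .D) (.seq anyB (.notP anyB)))) (a :: b :: x'')
          (some (a :: ((b :: x'').take (n-2) ++ [c]))) :=
        seqOk' (y₁ := [a]) (z := b :: x'') rfl rfl (any_cons _ _) hmid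
      have hfull : PR (.nt .Q) (a :: b :: x'')
          (some (a :: ((b :: x'').take (n-2) ++ [c]))) :=
        mkQ (.choice₂ _ _ _ _ halt1 halt2)
      rw [← hsplit] at hfull
      exact hfull
  have hQf : ¬ Pow2 n → PR (.nt .Q) x none := by
    intro hnp
    by_cases hn0 : n = 0
    · subst hn0
      obtain rfl : x = [] := List.length_eq_zero_iff.mp hx
      exact mkQ (.choice₂ _ _ _ _ (.seqFail₁ _ _ _ any_nil) (.seqFail₁ _ _ _ any_nil))
    · by_cases hn1 : n = 1
      · exact absurd (show Pow2 n by rw [hn1]; exact pow2_one) hnp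
      · obtain ⟨a, b, x'', rfl⟩ := list_len2 (l := x) (by omega)
        have hlen'' : x''.length + 2 = n := by simpa using hx
        have halt1 : PR (.seq anyB (.notP anyB)) (a :: b :: x'') none :=
          seqFail₂' (y₁ := [a]) (z := b :: x'') rfl (any_cons _ _) (notAny_cons _ _)
        obtain ⟨k, hk1, hk2⟩ := pow2_bracket hn0
        have hne : n ≠ 2^k := fun h => hnp ⟨k, h⟩
        have hps : (2:ℕ)^(k+1) = 2^k * 2 := pow_succ 2 k
        have hpp := Nat.two_pow_pos k
        have hD := (IH (n-1) (by omega) (b :: x'') (by simp; omega)).2.2.1 k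
          (by omega) (by omega)
        have hrem : 2 ≤ ((b :: x'').drop (2*((n-1) - 2^k))).length := by simp; omega
        obtain ⟨c, d, z, hcd⟩ := list_len2 hrem
        have hsplit : b :: x'' = (b :: x'').take (2*((n-1) - 2^k)) ++ (c :: d :: z) := by
          conv_lhs => rw [← List.take_append_drop (2*((n-1) - 2^k)) (b :: x'')]
          rw [hcd]
        have htail : PR (.seq anyB (.notP anyB)) (c :: d :: z) none :=
          seqFail₂' (y₁ := [c]) (z := d :: z) rfl (any_cons _ _) (notAny_cons _ _)
        have hmid : PR (.seq (.nt .D) (.seq anyB (.notP anyB))) (b :: x'') none :=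
          seqFail₂' hsplit hD htail
        have halt2 : PR (.seq anyB (.seq (.nt .D) (.seq anyB (.notP anyB))))
            (a :: b :: x'') none :=
          seqFail₂' (y₁ := [a]) (z := b :: x'') rfl (any_cons _ _) hmid
        exact mkQ (.choice₂ _ _ _ _ halt1 halt2)
  have hDs : ∀ k, 2^k ≤ n → n < 2^(k+1) → PR (.nt .D) x (some (x.take (2*(n - 2^k)))) := by
    intro k hk1 hk2
    have hps : (2:ℕ)^(k+1) = 2^k * 2 := pow_succ 2 k
    have hpp := Nat.two_pow_pos k
    by_cases hpk : n = 2^k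
    · have hq := hQs ⟨k, hpk⟩
      have h0 : 2*(n - 2^k) = 0 := by omega
      rw [h0]
      simpa using mkD (.choice₁ _ _ _ _ (.andSucc _ _ _ hq))
    · have hq : PR (.nt .Q) x none := hQf (not_pow2_between (by omega) hk2)
      obtain ⟨a, x', rfl⟩ : ∃ a x', x = a :: x' := by
        cases x with
        | nil => simp at hx; omega
        | cons a x' => exact ⟨a, x', rfl⟩
      have hlen' : x'.length + 1 = n := by simpa using hx
      have hD' := (IH (n-1) (by omega) x' (by omega)).2.2.1 k (by omega) (by omega)
      have hrem : 1 ≤ (x'.drop (2*((n-1) - 2^k))).length := by simp; omega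
      obtain ⟨b, z, hbz⟩ : ∃ b z, x'.drop (2*((n-1) - 2^k)) = b :: z := by
        cases hh : x'.drop (2*((n-1) - 2^k)) with
        | nil => rw [hh] at hrem; simp at hrem
        | cons b z => exact ⟨b, z, rfl⟩
      have hsplit : x' = x'.take (2*((n-1) - 2^k)) ++ (b :: z) := by
        conv_lhs => rw [← List.take_append_drop (2*((n-1) - 2^k)) x']
        rw [hbz]
      have hmid : PR (.seq (.nt .D) anyB) x' (some (x'.take (2*((n-1) - 2^k)) ++ [b])) :=
        seqOk' hsplit rfl hD' (any_cons b z)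
      have halt2 : PR (.seq anyB (.seq (.nt .D) anyB)) (a :: x')
          (some (a :: (x'.take (2*((n-1) - 2^k)) ++ [b]))) :=
        seqOk' (y₁ := [a]) (z := x') rfl rfl (any_cons _ _) hmid
      have hfull : PR (.nt .D) (a :: x')
          (some (a :: (x'.take (2*((n-1) - 2^k)) ++ [b]))) :=
        mkD (.choice₂ _ _ _ _ (.andFail _ _ hq) halt2)
      have htake : (a :: x').take (2*(n - 2^k)) = a :: (x'.take (2*((n-1) - 2^k)) ++ [b]) := by
        have h2 : 2*(n - 2^k) = (2*((n-1) - 2^k) + 1) + 1 := by omega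
        rw [h2, List.take_succ_cons, List.take_add, hbz]
        simp
      rw [htake]
      exact hfull
  have hDn : n = 0 → PR (.nt .D) x none := by
    intro h0; subst h0
    obtain rfl : x = [] := List.length_eq_zero_iff.mp hx
    exact mkD (.choice₂ _ _ _ _ (.andFail _ _ (hQf not_pow2_zero)) (.seqFail₁ _ _ _ any_nil))
  exact ⟨hQs, hQf, hDs, hDn⟩

theorem Q_succ {x : List Bool} (h : Pow2 x.length) : PR (.nt .Q) x (some x) :=
  (QD_char _ x rfl).1 h

theorem Q_fail {x : List Bool} (h : ¬ Pow2 x.length) : PR (.nt .Q) x none :=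
  (QD_char _ x rfl).2.1 h

theorem D_nil : PR (.nt .D) [] none := (QD_char 0 [] rfl).2.2.2 rfl

theorem Q_sound {x r : List Bool} (h : PR (.nt .Q) x (some r)) : Pow2 x.length := by
  by_contra hn
  have := peg_det h (Q_fail hn)
  simp at this

theorem Q_tot (x : List Bool) : ∃ r, PR (.nt .Q) x r := by
  by_cases h : Pow2 x.length
  exacts [⟨_, Q_succ h⟩, ⟨_, Q_fail h⟩]

theorem D_tot (x : List Bool) : ∃ r, PR (.nt .D) x r := by
  cases x with
  | nil => exact ⟨_, D_nil⟩
  | cons a x' =>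
    obtain ⟨k, h1, h2⟩ := pow2_bracket (n := (a :: x').length) (by simp)
    exact ⟨_, (QD_char _ _ rfl).2.2.1 k h1 h2⟩

/-! ### The nonterminal `W` -/

theorem W_complete : ∀ (u t : List Bool),
    (∀ j, j < u.length → ¬ Pow2 (2*u.length + t.length - j)) →
    Pow2 (u.length + t.length) →
    PR (.nt .W) ((u ++ u.reverse) ++ t) (some (u ++ u.reverse)) := by
  intro u
  induction u with
  | nil =>
    intro t _ hp
    simp only [List.reverse_nil, List.append_nil, List.nil_append]
    exact mkW (.choice₁ _ _ _ _ (.andSucc _ _ _ (Q_succ (by simpa using hp))))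
  | cons a u' IHu =>
    intro t hnp hp
    have hx : ((a :: u') ++ (a :: u').reverse) ++ t
        = a :: ((u' ++ u'.reverse) ++ (a :: t)) := by simp
    have hW' : PR (.nt .W) ((u' ++ u'.reverse) ++ (a :: t)) (some (u' ++ u'.reverse)) := by
      apply IHu (a :: t)
      · intro j hj
        have heq : 2 * u'.length + (a :: t).length - j
            = 2 * (a :: u').length + t.length - (j+1) := by simp; omega
        rw [heq]
        exact hnp (j+1) (by simp; omega)
      · have heq : u'.length + (a :: t).length = (a :: u').length + t.length := by
          simp; omega
        rw [heq]; exact hp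
    have hq : PR (.nt .Q) (a :: ((u' ++ u'.reverse) ++ (a :: t))) none := by
      apply Q_fail
      intro hP
      apply hnp 0 (by simp)
      have heq : (a :: ((u' ++ u'.reverse) ++ (a :: t))).length
          = 2 * (a :: u').length + t.length - 0 := by simp; omega
      rwa [heq] at hP
    have hinner : PR (.seq (.nt .W) (.term a)) ((u' ++ u'.reverse) ++ (a :: t))
        (some ((u' ++ u'.reverse) ++ [a])) :=
      seqOk' rfl rfl hW' (.termOk a t)
    have hAa : PR (pA a) (a :: ((u' ++ u'.reverse) ++ (a :: t)))
        (some (a :: ((u' ++ u'.reverse) ++ [a]))) :=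
      seqOk' (y₁ := [a]) rfl rfl (.termOk _ _) hinner
    have hch : PR (.choice (pA false) (pA true)) (a :: ((u' ++ u'.reverse) ++ (a :: t)))
        (some (a :: ((u' ++ u'.reverse) ++ [a]))) := by
      cases a with
      | false => exact .choice₁ _ _ _ _ hAa
      | true => exact .choice₂ _ _ _ _ (.seqFail₁ _ _ _ (.termMismatch _ _ _ (by simp))) hAa
    have hWfull : PR (.nt .W) (a :: ((u' ++ u'.reverse) ++ (a :: t)))
        (some (a :: ((u' ++ u'.reverse) ++ [a]))) :=
      mkW (.choice₂ _ _ _ _ (.andFail _ _ hq) hch)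
    have hy2 : (a :: u') ++ (a :: u').reverse = a :: ((u' ++ u'.reverse) ++ [a]) := by simp
    rw [hx, hy2]
    exact hWfull

theorem W_sound : ∀ (x y : List Bool), PR (.nt .W) x (some y) →
    ∃ u t, x = (u ++ u.reverse) ++ t ∧ y = u ++ u.reverse ∧ Pow2 (u.length + t.length) := by
  have key : ∀ n (x : List Bool), x.length = n → ∀ y, PR (.nt .W) x (some y) →
      ∃ u t, x = (u ++ u.reverse) ++ t ∧ y = u ++ u.reverse ∧ Pow2 (u.length + t.length) := by
    intro n
    induction n using Nat.strong_induction_on with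
    | _ n IHn =>
    intro x hx y h
    have h' : PR (.choice (.andP (.nt .Q)) (.choice (pA false) (pA true))) x (some y) :=
      nt_inv h
    have branch : ∀ a : Bool, PR (pA a) x (some y) →
        ∃ u t, x = (u ++ u.reverse) ++ t ∧ y = u ++ u.reverse ∧ Pow2 (u.length + t.length) := by
      intro a ha
      obtain ⟨y₁, z, y₂, hxz, hyy, hterm, hrest⟩ := seq_some_inv ha
      obtain ⟨rfl, z₀, hxa⟩ := term_some_inv hterm
      obtain ⟨y₃, z₂, y₄, hz₂, hy₂, hWz, hterm2⟩ := seq_some_inv hrest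
      obtain ⟨rfl, z₃, hz₃⟩ := term_some_inv hterm2
      have hzlen : z.length < n := by rw [hxz] at hx; simp at hx; omega
      obtain ⟨u', t', hzdecomp, hy₃, hPow⟩ := IHn z.length hzlen z rfl y₃ hWz
      have ht' : t' = a :: z₃ := by
        have h1 : (u' ++ u'.reverse) ++ t' = (u' ++ u'.reverse) ++ (a :: z₃) := by
          rw [← hzdecomp, hz₂, hy₃, hz₃]
        exact List.append_cancel_left h1
      refine ⟨a :: u', z₃, ?_, ?_, ?_⟩
      · rw [hxz, hzdecomp, ht']; simp
      · rw [hyy, hy₂, hy₃]; simp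
      · have heq : (a :: u').length + z₃.length = u'.length + t'.length := by
          rw [ht']; simp; omega
        rwa [heq]
    rcases choice_some_inv h' with h1 | ⟨_, h2⟩
    · obtain ⟨rfl, w, hw⟩ := andP_some_inv h1
      exact ⟨[], x, by simp, by simp, by simpa using Q_sound hw⟩
    · rcases choice_some_inv h2 with h3 | ⟨_, h3⟩
      exacts [branch false h3, branch true h3]
  intro x y h
  exact key x.length x rfl y h

theorem pA_tot (a : Bool) (x : List Bool)
    (hW : ∀ z : List Bool, z.length < x.length → ∃ r, PR (.nt .W) z r) :
    ∃ r, PR (pA a) x r := by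
  cases x with
  | nil => exact ⟨none, .seqFail₁ _ _ _ (.termNil _)⟩
  | cons b x' =>
    by_cases hab : a = b
    · subst hab
      obtain ⟨r, hr⟩ := hW x' (by simp)
      cases r with
      | none =>
        exact ⟨none, seqFail₂' (y₁ := [a]) rfl (.termOk _ _) (.seqFail₁ _ _ _ hr)⟩
      | some y =>
        obtain ⟨z, rfl⟩ := peg_prefix' hr
        cases z with
        | nil =>
          exact ⟨none, seqFail₂' (y₁ := [a]) rfl (.termOk _ _)
            (seqFail₂' rfl hr (.termNil _))⟩
        | cons c z' =>
          by_cases hac : a = c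
          · subst hac
            exact ⟨some ([a] ++ (y ++ [a])), seqOk' (y₁ := [a]) rfl rfl (.termOk _ _)
              (seqOk' rfl rfl hr (.termOk _ _))⟩
          · exact ⟨none, seqFail₂' (y₁ := [a]) rfl (.termOk _ _)
              (seqFail₂' rfl hr (.termMismatch a c z' hac))⟩
    · exact ⟨none, .seqFail₁ _ _ _ (.termMismatch a b x' hab)⟩

theorem W_tot : ∀ x : List Bool, ∃ r, PR (.nt .W) x r := by
  have key : ∀ n (x : List Bool), x.length = n → ∃ r, PR (.nt .W) x r := by
    intro n
    induction n using Nat.strong_induction_on with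
    | _ n IH =>
    intro x hx
    by_cases hp : Pow2 x.length
    · exact ⟨some [], mkW (.choice₁ _ _ _ _ (.andSucc _ _ _ (Q_succ hp)))⟩
    · have hq : PR (.andP (.nt .Q)) x none := .andFail _ _ (Q_fail hp)
      have hWsub : ∀ z : List Bool, z.length < x.length → ∃ r, PR (.nt .W) z r :=
        fun z hz => IH z.length (by omega) z rfl
      obtain ⟨r0, h0⟩ := pA_tot false x hWsub
      cases r0 with
      | some y => exact ⟨_, mkW (.choice₂ _ _ _ _ hq (.choice₁ _ _ _ _ h0))⟩
      | none =>
        obtain ⟨r1, h1⟩ := pA_tot true x hWsub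
        exact ⟨r1, mkW (.choice₂ _ _ _ _ hq (.choice₂ _ _ _ _ h0 h1))⟩
  intro x; exact key x.length x rfl

/-! ### The start symbol `S` -/

theorem S_complete {w : List Bool} {k : ℕ} (hw : w.length = 2^k) :
    PR (.nt .S) (w ++ w.reverse) (some (w ++ w.reverse)) := by
  cases w with
  | nil =>
    exfalso
    have := Nat.two_pow_pos k
    simp at hw
    omega
  | cons a u =>
    have hu : u.length + 1 = 2^k := by simpa using hw
    have hps : (2:ℕ)^(k+1) = 2^k * 2 := pow_succ 2 k
    have hpp := Nat.two_pow_pos k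
    have hW : PR (.nt .W) ((u ++ u.reverse) ++ [a]) (some (u ++ u.reverse)) := by
      apply W_complete u [a]
      · intro j hj
        exact not_pow2_between (k := k) (by simp; omega) (by simp; omega)
      · have heq : u.length + [a].length = 2^k := by simp; omega
        rw [heq]; exact ⟨k, rfl⟩
    have hinner : PR (.seq (.nt .W) (.term a)) ((u ++ u.reverse) ++ [a])
        (some ((u ++ u.reverse) ++ [a])) :=
      seqOk' rfl rfl hW (.termOk a [])
    have hAa : PR (pA a) (a :: ((u ++ u.reverse) ++ [a]))
        (some (a :: ((u ++ u.reverse) ++ [a]))) :=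
      seqOk' (y₁ := [a]) rfl rfl (.termOk _ _) hinner
    have hch : PR (.choice (pA false) (pA true)) (a :: ((u ++ u.reverse) ++ [a]))
        (some (a :: ((u ++ u.reverse) ++ [a]))) := by
      cases a with
      | false => exact .choice₁ _ _ _ _ hAa
      | true => exact .choice₂ _ _ _ _ (.seqFail₁ _ _ _ (.termMismatch _ _ _ (by simp))) hAa
    have hS : PR (Rul .S) (a :: ((u ++ u.reverse) ++ [a]))
        (some (a :: ((u ++ u.reverse) ++ [a]))) :=
      seqOk' (z := []) (y₂ := []) (by simp) (by simp) hch notAny_nil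
    have hXeq : (a :: u) ++ (a :: u).reverse = a :: ((u ++ u.reverse) ++ [a]) := by simp
    rw [hXeq]
    exact mkS hS

theorem S_sound {x : List Bool} (h : PR (.nt .S) x (some x)) :
    ∃ w k, w.length = 2^k ∧ x = w ++ w.reverse := by
  have h' : PR (.seq (.choice (pA false) (pA true)) (.notP anyB)) x (some x) := nt_inv h
  obtain ⟨y₁, z, y₂, hxz, hxy, hch, hnot⟩ := seq_some_inv h'
  obtain ⟨rfl, hnone⟩ := notP_some_inv hnot
  have hz : z = [] := any_none_inv hnone
  subst hz
  obtain rfl : x = y₁ := by simpa using hxz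
  have key : ∀ a : Bool, PR (pA a) x (some x) →
      ∃ w k, w.length = 2^k ∧ x = w ++ w.reverse := by
    intro a ha
    obtain ⟨y₁, z, y₂, hxz2, hxy2, hterm, hrest⟩ := seq_some_inv ha
    obtain ⟨rfl, z₀, hxa⟩ := term_some_inv hterm
    obtain ⟨y₃, z₂, y₄, hz₂, hy₂, hWz, hterm2⟩ := seq_some_inv hrest
    obtain ⟨rfl, z₃, hz₃⟩ := term_some_inv hterm2
    have hzy : z = y₃ ++ [a] := by
      have h1 : [a] ++ z = [a] ++ (y₃ ++ [a]) := by
        rw [← hxz2, hxy2, hy₂]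
      exact List.append_cancel_left h1
    have hz₃nil : z₃ = [] := by
      have h1 : y₃ ++ [a] = y₃ ++ (a :: z₃) := by rw [← hzy, hz₂, hz₃]
      have h2 := List.append_cancel_left h1
      injection h2 with _ h3
      exact h3.symm
    obtain ⟨u, t, hzd, hy₃, hPow⟩ := W_sound z y₃ hWz
    have ht : t = [a] := by
      have h1 : (u ++ u.reverse) ++ t = (u ++ u.reverse) ++ [a] := by
        rw [← hzd, hzy, hy₃]
      exact List.append_cancel_left h1
    obtain ⟨kk, hkk⟩ := hPow
    refine ⟨a :: u, kk, ?_, ?_⟩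
    · rw [ht] at hkk; simp at hkk ⊢; omega
    · rw [hxz2, hzd, ht]; simp
  rcases choice_some_inv hch with h1 | ⟨_, h1⟩
  exacts [key false h1, key true h1]

theorem S_tot (x : List Bool) : ∃ r, PR (.nt .S) x r := by
  have hWsub : ∀ z : List Bool, z.length < x.length → ∃ r, PR (.nt .W) z r :=
    fun z _ => W_tot z
  have hch : ∃ r, PR (.choice (pA false) (pA true)) x r := by
    obtain ⟨r0, h0⟩ := pA_tot false x hWsub
    cases r0 with
    | some y => exact ⟨_, .choice₁ _ _ _ _ h0⟩
    | none =>
      obtain ⟨r1, h1⟩ := pA_tot true x hWsub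
      exact ⟨_, .choice₂ _ _ _ _ h0 h1⟩
  obtain ⟨r, hr⟩ := hch
  cases r with
  | none => exact ⟨none, mkS (.seqFail₁ _ _ _ hr)⟩
  | some y =>
    obtain ⟨z, rfl⟩ := peg_prefix' hr
    cases z with
    | nil => exact ⟨some (y ++ []), mkS (seqOk' rfl rfl hr notAny_nil)⟩
    | cons c z' => exact ⟨none, mkS (seqFail₂' rfl hr (notAny_cons c z'))⟩

/-! ### Totality -/

theorem exp_tot : ∀ (e : PExp Bool SPNT) (x : List Bool), ∃ r, PR e x r := by
  intro e
  induction e with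
  | eps => exact fun x => ⟨_, .eps x⟩
  | fail => exact fun x => ⟨_, .fail x⟩
  | term a =>
    intro x
    cases x with
    | nil => exact ⟨_, .termNil a⟩
    | cons b z =>
      by_cases h : a = b
      · subst h; exact ⟨_, .termOk a z⟩
      · exact ⟨_, .termMismatch a b z h⟩
  | nt A =>
    intro x
    cases A with
    | S => exact S_tot x
    | W => exact W_tot x
    | Q => exact Q_tot x
    | D => exact D_tot x
  | notP e ih =>
    intro x
    obtain ⟨r, hr⟩ := ih x
    cases r with
    | none => exact ⟨_, .notFail _ _ hr⟩
    | some y => exact ⟨_, .notSucc _ _ _ hr⟩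
  | andP e ih =>
    intro x
    obtain ⟨r, hr⟩ := ih x
    cases r with
    | none => exact ⟨_, .andFail _ _ hr⟩
    | some y => exact ⟨_, .andSucc _ _ _ hr⟩
  | seq e₁ e₂ ih₁ ih₂ =>
    intro x
    obtain ⟨r₁, h₁⟩ := ih₁ x
    cases r₁ with
    | none => exact ⟨_, .seqFail₁ _ _ _ h₁⟩
    | some y₁ =>
      obtain ⟨z, rfl⟩ := peg_prefix' h₁
      obtain ⟨r₂, h₂⟩ := ih₂ z
      cases r₂ with
      | none => exact ⟨_, .seqFail₂ _ _ _ _ h₁ h₂⟩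
      | some y₂ => exact ⟨_, .seqOk _ _ _ _ _ h₁ h₂⟩
  | choice e₁ e₂ ih₁ ih₂ =>
    intro x
    obtain ⟨r₁, h₁⟩ := ih₁ x
    cases r₁ with
    | some y => exact ⟨_, .choice₁ _ _ _ _ h₁⟩
    | none =>
      obtain ⟨r₂, h₂⟩ := ih₂ x
      exact ⟨_, .choice₂ _ _ _ _ h₁ h₂⟩

/-- The language of binary palindromes of power-of-two length,
`SP = { w·wʳ : w ∈ {0,1}^(2^n), n ≥ 0 }`, is recognised by some total PEG. -/
theorem sometimesPalindromes_isPEG :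
    IsPEGLang { s : List Bool |
      ∃ (w : List Bool) (n : ℕ), w.length = 2 ^ n ∧ s = w ++ w.reverse } := by
  refine ⟨⟨SPNT, inferInstance, Rul, .S⟩, ?_, ?_⟩
  · intro e x
    exact exp_tot e x
  · ext x
    simp only [PEG.Lang, Set.mem_setOf_eq]
    constructor
    · intro h
      obtain ⟨w, k, hk, hx⟩ := S_sound h
      exact ⟨w, k, hk, hx⟩
    · rintro ⟨w, n, hw, rfl⟩
      exact S_complete hw
end

section
/- The reversed counting language over the alphabet {0,1,#,∘}, namely { (n)₂ʳ ∘ (n)₂ # (n−1)₂ʳ ∘ (n−1)₂ # ⋯ # (0)₂ʳ ∘ (0)₂ # : n ≥ 0 }, is recognised by some total parsing expression grammar; that is, it is in PEG. -/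
/-- The four-symbol alphabet `{0, 1, #, ∘}` of the counting language. -/
inductive CSym : Type where
  | b0 : CSym   -- the bit 0
  | b1 : CSym   -- the bit 1
  | hash : CSym -- the outer separator #
  | circ : CSym -- the inner separator ∘
  deriving DecidableEq

/-- The shortest (most-significant-bit-first) binary representation `(n)₂`
of a natural number, as a list of booleans; by convention `(0)₂ = "0"`. -/
def natBin (n : ℕ) : List Bool :=
  if n = 0 then [false] else (Nat.bits n).reverse

/-- A list of bits as a string over `CSym`. -/
def bitsToCSym (w : List Bool) : List CSym :=
  w.map (fun b => if b then CSym.b1 else CSym.b0)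

/-- The block `(n)₂ʳ ∘ (n)₂ #` of the reversed counting language. -/
def countBlock (n : ℕ) : List CSym :=
  bitsToCSym (natBin n).reverse ++ [CSym.circ] ++ bitsToCSym (natBin n) ++ [CSym.hash]

/-!
Each block `(n)₂ʳ ∘ (n)₂ #` is a palindrome around `∘` followed by `#`, matched by
`block ← 0 block 0 / 1 block 1 / ∘ &incrCheck`. At the centre the lookahead reads
`(n)₂ # (n-1)₂ʳ ∘`. If `(n-1)₂ = w 0 1ʲ` then `(n)₂ = w 1 0ʲ`, so this string is
`w 1 0ʲ # 1ʲ 0 wʳ ∘`, a palindrome around the carry `0ʲ # 1ʲ`, checked by `incr` and `carry`;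
if `(n-1)₂ = 1ʲ` it is `1 0ʲ # 1ʲ ∘`. The last block `0∘0#` ends the recursion `blocks`.
Every call of a non-terminal either follows a consumed terminal or goes to a non-terminal whose
own calls do, so induction on the input length shows that the grammar is total. In a total
grammar an expression that cannot succeed fails, which settles the rejected alternatives of the
ordered choices.
-/

section PegTheory

variable {α ν : Type} {R : ν → PExp α ν} {e e₁ e₂ : PExp α ν} {x w z : List α}

theorem PegRec.exists_eq_append {y : List α} (h : PegRec R e x (some y)) : ∃ z, x = y ++ z := by
  generalize hr : some y = r at h
  induction h generalizing y with
  | seqOk _ _ y₁ _ _ _ _ _ ih₂ =>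
    obtain ⟨z, rfl⟩ := ih₂ rfl
    cases hr
    exact ⟨z, by simp⟩
  | choice₁ _ _ _ _ _ ih | choice₂ _ _ _ _ _ _ _ ih | ntRule _ _ _ _ ih => exact ih hr
  | termOk a z => cases hr; exact ⟨z, rfl⟩
  | eps x | notFail _ x | andSucc _ x => cases hr; exact ⟨x, rfl⟩
  | _ => cases hr

def Leaves (R : ν → PExp α ν) (e : PExp α ν) (x z : List α) : Prop :=
  ∃ y, x = y ++ z ∧ PegRec R e x (some y)

theorem pegRec_some_self_iff : PegRec R e x (some x) ↔ Leaves R e x [] := by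
  simp [Leaves]

theorem leaves_term_iff {a : α} : Leaves R (.term a) x z ↔ x = a :: z := by
  constructor
  · rintro ⟨y, hx, h⟩
    cases h
    exact hx
  · rintro rfl
    exact ⟨[a], rfl, .termOk a z⟩

theorem leaves_seq_iff :
    Leaves R (.seq e₁ e₂) x z ↔ ∃ w, Leaves R e₁ x w ∧ Leaves R e₂ w z := by
  constructor
  · rintro ⟨y, hx, h⟩
    cases h with
    | seqOk _ _ y₁ w y₂ h₁ h₂ =>
      rw [List.append_assoc] at hx
      exact ⟨w, ⟨y₁, rfl, h₁⟩, y₂, List.append_cancel_left hx, h₂⟩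
  · rintro ⟨w, ⟨y₁, rfl, h₁⟩, y₂, rfl, h₂⟩
    exact ⟨y₁ ++ y₂, by simp, .seqOk _ _ _ _ _ h₁ h₂⟩

theorem leaves_choice_iff :
    Leaves R (.choice e₁ e₂) x z ↔
      Leaves R e₁ x z ∨ (PegRec R e₁ x none ∧ Leaves R e₂ x z) := by
  constructor
  · rintro ⟨y, hx, h⟩
    cases h with
    | choice₁ _ _ _ _ h₁ => exact .inl ⟨y, hx, h₁⟩
    | choice₂ _ _ _ _ h₁ h₂ => exact .inr ⟨h₁, y, hx, h₂⟩
  · rintro (⟨y, hx, h₁⟩ | ⟨h₁, y, hx, h₂⟩)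
    · exact ⟨y, hx, .choice₁ _ _ _ _ h₁⟩
    · exact ⟨y, hx, .choice₂ _ _ _ _ h₁ h₂⟩

theorem leaves_andP_iff : Leaves R (.andP e) x z ↔ z = x ∧ ∃ w, Leaves R e x w := by
  constructor
  · rintro ⟨y, rfl, h⟩
    cases h with
    | andSucc _ _ y' h =>
      obtain ⟨w, hw⟩ := h.exists_eq_append
      exact ⟨rfl, w, y', hw, h⟩
  · rintro ⟨rfl, w, y, rfl, h⟩
    exact ⟨[], rfl, .andSucc _ _ _ h⟩

theorem leaves_nt_iff {A : ν} : Leaves R (.nt A) x z ↔ Leaves R (R A) x z := by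
  constructor
  · rintro ⟨y, hx, h⟩
    cases h with
    | ntRule _ _ _ h => exact ⟨y, hx, h⟩
  · rintro ⟨y, hx, h⟩
    exact ⟨y, hx, .ntRule _ _ _ h⟩

namespace Leaves

theorem term (a : α) (z : List α) : Leaves R (.term a) (a :: z) z := leaves_term_iff.2 rfl

theorem seq (h₁ : Leaves R e₁ x w) (h₂ : Leaves R e₂ w z) : Leaves R (.seq e₁ e₂) x z :=
  leaves_seq_iff.2 ⟨w, h₁, h₂⟩

theorem choice_left (h : Leaves R e₁ x z) : Leaves R (.choice e₁ e₂) x z :=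
  leaves_choice_iff.2 (.inl h)

theorem choice_right (h₁ : PegRec R e₁ x none) (h₂ : Leaves R e₂ x z) :
    Leaves R (.choice e₁ e₂) x z :=
  leaves_choice_iff.2 (.inr ⟨h₁, h₂⟩)

theorem andP (h : Leaves R e x w) : Leaves R (.andP e) x x :=
  leaves_andP_iff.2 ⟨rfl, w, h⟩

theorem nt {A : ν} (h : Leaves R (R A) x z) : Leaves R (.nt A) x z :=
  leaves_nt_iff.2 h

end Leaves

theorem pegRec_none_of_forall_not_leaves (htot : ∀ e x, ∃ r, PegRec R e x r)
    (h : ∀ z, ¬ Leaves R e x z) : PegRec R e x none := by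
  obtain ⟨_ | y, hr⟩ := htot e x
  · exact hr
  · obtain ⟨z, hz⟩ := hr.exists_eq_append
    exact absurd ⟨y, hz, hr⟩ (h z)

namespace PegRec

theorem exists_term (a : α) (x : List α) : ∃ r, PegRec R (.term a) x r := by
  rcases x with _ | ⟨b, z⟩
  · exact ⟨_, .termNil a⟩
  · by_cases hab : a = b
    · exact hab ▸ ⟨_, .termOk a z⟩
    · exact ⟨_, .termMismatch a b z hab⟩

theorem exists_notP (h : ∃ r, PegRec R e x r) : ∃ r, PegRec R (.notP e) x r := by
  obtain ⟨_ | y, hr⟩ := h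
  exacts [⟨_, .notFail _ _ hr⟩, ⟨_, .notSucc _ _ _ hr⟩]

theorem exists_andP (h : ∃ r, PegRec R e x r) : ∃ r, PegRec R (.andP e) x r := by
  obtain ⟨_ | y, hr⟩ := h
  exacts [⟨_, .andFail _ _ hr⟩, ⟨_, .andSucc _ _ _ hr⟩]

theorem exists_seq (h₁ : ∃ r, PegRec R e₁ x r)
    (h₂ : ∀ z, Leaves R e₁ x z → ∃ r, PegRec R e₂ z r) :
    ∃ r, PegRec R (.seq e₁ e₂) x r := by
  obtain ⟨_ | y, hr₁⟩ := h₁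
  · exact ⟨_, .seqFail₁ _ _ _ hr₁⟩
  obtain ⟨z, rfl⟩ := hr₁.exists_eq_append
  obtain ⟨_ | y₂, hr₂⟩ := h₂ z ⟨y, rfl, hr₁⟩
  exacts [⟨_, .seqFail₂ _ _ _ _ hr₁ hr₂⟩, ⟨_, .seqOk _ _ _ _ _ hr₁ hr₂⟩]

theorem exists_choice (h₁ : ∃ r, PegRec R e₁ x r) (h₂ : ∃ r, PegRec R e₂ x r) :
    ∃ r, PegRec R (.choice e₁ e₂) x r := by
  obtain ⟨_ | y, hr₁⟩ := h₁
  · obtain ⟨r, hr₂⟩ := h₂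
    exact ⟨r, .choice₂ _ _ _ _ hr₁ hr₂⟩
  · exact ⟨_, .choice₁ _ _ _ _ hr₁⟩

theorem exists_nt {A : ν} (h : ∃ r, PegRec R (R A) x r) : ∃ r, PegRec R (.nt A) x r :=
  let ⟨r, hr⟩ := h; ⟨r, .ntRule _ _ _ hr⟩

theorem total_of_forall_nt (h : ∀ A x, ∃ r, PegRec R (.nt A) x r) :
    ∀ e x, ∃ r, PegRec R e x r := by
  intro e
  induction e with
  | eps => exact fun x => ⟨_, .eps x⟩
  | fail => exact fun x => ⟨_, .fail x⟩
  | term a => exact exists_term a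
  | nt A => exact h A
  | notP e ih => exact fun x => exists_notP (ih x)
  | andP e ih => exact fun x => exists_andP (ih x)
  | seq e₁ e₂ ih₁ ih₂ => exact fun x => exists_seq (ih₁ x) fun z _ => ih₂ z
  | choice e₁ e₂ ih₁ ih₂ => exact fun x => exists_choice (ih₁ x) (ih₂ x)

end PegRec

def DefinedBelow (R : ν → PExp α ν) (e : PExp α ν) (n : ℕ) : Prop :=
  ∀ x : List α, x.length < n → ∃ r, PegRec R e x r

namespace DefinedBelow

variable {n : ℕ}

theorem mono {m : ℕ} (h : DefinedBelow R e n) (hmn : m ≤ n) : DefinedBelow R e m :=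
  fun x hx => h x (hx.trans_le hmn)

theorem term (a : α) : DefinedBelow R (.term a) n :=
  fun x _ => PegRec.exists_term a x

theorem andP (h : DefinedBelow R e n) : DefinedBelow R (.andP e) n :=
  fun x hx => PegRec.exists_andP (h x hx)

theorem seq (h₁ : DefinedBelow R e₁ n) (h₂ : DefinedBelow R e₂ n) :
    DefinedBelow R (.seq e₁ e₂) n :=
  fun x hx => PegRec.exists_seq (h₁ x hx) fun z ⟨y, hxz, _⟩ =>
    h₂ z (lt_of_le_of_lt (by simp [hxz]) hx)

theorem term_seq (a : α) (h : DefinedBelow R e n) : DefinedBelow R (.seq (.term a) e) (n + 1) :=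
  fun x hx => PegRec.exists_seq (PegRec.exists_term a x) fun z hz => by
    rw [leaves_term_iff] at hz
    exact h z (by simpa [hz] using hx)

theorem choice (h₁ : DefinedBelow R e₁ n) (h₂ : DefinedBelow R e₂ n) :
    DefinedBelow R (.choice e₁ e₂) n :=
  fun x hx => PegRec.exists_choice (h₁ x hx) (h₂ x hx)

theorem nt {A : ν} (h : DefinedBelow R (R A) n) : DefinedBelow R (.nt A) n :=
  fun x hx => PegRec.exists_nt (h x hx)

end DefinedBelow

end PegTheory

def incBits : List Bool → List Bool
  | [] => [true]
  | false :: l => true :: l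
  | true :: l => false :: incBits l

theorem Nat.bits_add_one (m : ℕ) : (m + 1).bits = incBits m.bits := by
  induction m using Nat.binaryRec' with
  | zero => simp [incBits]
  | bit b k hk ih =>
    cases b
    · rw [Nat.bits_append_bit _ _ hk, show k.bit false + 1 = k.bit true by simp [Nat.bit_val]]
      simp [incBits]
    · rw [Nat.bits_append_bit _ _ hk, show k.bit true + 1 = (k + 1).bit false by
        simp [Nat.bit_val]; ring, Nat.bits_append_bit _ _ (by simp), ih, incBits]

theorem natBin_add_one (m : ℕ) : natBin (m + 1) = (incBits (natBin m).reverse).reverse := by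
  rcases eq_or_ne m 0 with rfl | hm
  · simp [natBin, incBits]
  · simp [natBin, hm, Nat.bits_add_one]

theorem incBits_replicate_true_append (j : ℕ) (l : List Bool) :
    incBits (List.replicate j true ++ false :: l) = List.replicate j false ++ true :: l := by
  induction j with
  | zero => rfl
  | succ j ih => simp [List.replicate_succ, incBits, ih]

theorem incBits_replicate_true (j : ℕ) :
    incBits (List.replicate j true) = List.replicate j false ++ [true] := by
  induction j with
  | zero => rfl
  | succ j ih => simp [List.replicate_succ, incBits, ih]

theorem true_mem_incBits : ∀ l : List Bool, true ∈ incBits l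
  | [] | false :: _ => by simp [incBits]
  | true :: l => by simp [incBits, true_mem_incBits l]

theorem List.eq_replicate_true_append_or (v : List Bool) :
    (∃ j l, v = replicate j true ++ false :: l) ∨ ∃ j, v = replicate j true := by
  induction v with
  | nil => exact .inr ⟨0, rfl⟩
  | cons b v ih =>
    cases b
    · exact .inl ⟨0, v, rfl⟩
    · rcases ih with ⟨j, l, rfl⟩ | ⟨j, rfl⟩
      exacts [.inl ⟨j + 1, l, rfl⟩, .inr ⟨j + 1, rfl⟩]

theorem List.append_cons_eq_iff_of_notMem {α : Type} {a : α} {x₁ x₂ z₁ z₂ : List α}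
    (h₁ : a ∉ x₁) (h₂ : a ∉ x₂) :
    x₁ ++ a :: z₁ = x₂ ++ a :: z₂ ↔ x₁ = x₂ ∧ z₁ = z₂ := by
  induction x₁ generalizing x₂ with
  | nil => cases x₂ <;> simp_all [eq_comm]
  | cons b x₁ ih =>
    cases x₂
    · simp_all [eq_comm (a := b)]
    · simp_all [and_assoc]

section Encoding

open CSym

@[simp] theorem bitsToCSym_nil : bitsToCSym [] = [] := rfl

@[simp] theorem bitsToCSym_cons_true (w : List Bool) :
    bitsToCSym (true :: w) = b1 :: bitsToCSym w :=
  rfl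

@[simp] theorem bitsToCSym_cons_false (w : List Bool) :
    bitsToCSym (false :: w) = b0 :: bitsToCSym w :=
  rfl

@[simp] theorem bitsToCSym_append (u v : List Bool) :
    bitsToCSym (u ++ v) = bitsToCSym u ++ bitsToCSym v :=
  List.map_append ..

@[simp] theorem bitsToCSym_replicate_true (j : ℕ) :
    bitsToCSym (List.replicate j true) = List.replicate j b1 := by
  simp [bitsToCSym]

@[simp] theorem bitsToCSym_replicate_false (j : ℕ) :
    bitsToCSym (List.replicate j false) = List.replicate j b0 := by
  simp [bitsToCSym]

@[simp] theorem hash_notMem_bitsToCSym (w : List Bool) : hash ∉ bitsToCSym w := by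
  simp [bitsToCSym]

@[simp] theorem circ_notMem_bitsToCSym (w : List Bool) : circ ∉ bitsToCSym w := by
  simp [bitsToCSym]

@[simp] theorem bitsToCSym_inj {u v : List Bool} : bitsToCSym u = bitsToCSym v ↔ u = v :=
  (List.map_injective_iff.2 fun a b => by cases a <;> cases b <;> simp).eq_iff

end Encoding

infixr:70 " ⬝ " => PExp.seq
infixr:65 " ⫽ " => PExp.choice

namespace ReversedCounting

inductive NT : Type
  | carry | incr | block | blocks
  deriving DecidableEq

instance : Fintype NT :=
  Fintype.ofList [.carry, .incr, .block, .blocks] fun A => by cases A <;> simp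

open PExp CSym in
def incrCheck : PExp CSym NT :=
  nt .incr ⬝ term circ ⫽ term b1 ⬝ nt .carry ⬝ term circ

open PExp CSym in
def rules : NT → PExp CSym NT
  | .carry => term b0 ⬝ nt .carry ⬝ term b1 ⫽ term hash
  | .incr => term b0 ⬝ nt .incr ⬝ term b0 ⫽ term b1 ⬝ nt .incr ⬝ term b1 ⫽
      term b1 ⬝ nt .carry ⬝ term b0
  | .block => term b0 ⬝ nt .block ⬝ term b0 ⫽ term b1 ⬝ nt .block ⬝ term b1 ⫽
      term circ ⬝ andP incrCheck
  | .blocks => term b0 ⬝ term circ ⬝ term b0 ⬝ term hash ⫽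
      nt .block ⬝ term hash ⬝ nt .blocks

open DefinedBelow in
theorem rules_definedBelow (n : ℕ) (A : NT) : DefinedBelow rules (.nt A) n := by
  induction n generalizing A with
  | zero => exact fun _ h => absurd h (Nat.not_lt_zero _)
  | succ n ih =>
    have hblock : DefinedBelow rules (.nt .block) (n + 1) :=
      nt <| choice (term_seq _ <| seq (ih _) (term _)) <|
        choice (term_seq _ <| seq (ih _) (term _)) <|
        term_seq _ <| andP <| choice (seq (ih _) (term _)) <|
          (term_seq _ <| seq (ih _) (term _)).mono n.le_succ
    cases A
    · exact nt <| choice (term_seq _ <| seq (ih _) (term _)) (term _)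
    · exact nt <| choice (term_seq _ <| seq (ih _) (term _)) <|
        choice (term_seq _ <| seq (ih _) (term _)) (term_seq _ <| seq (ih _) (term _))
    · exact hblock
    · exact nt <| choice (seq (term _) <| seq (term _) <| seq (term _) (term _)) <|
        seq hblock <| term_seq _ <| ih _

theorem rules_total : ∀ e x, ∃ r, PegRec rules e x r :=
  PegRec.total_of_forall_nt fun A x => rules_definedBelow (x.length + 1) A x (Nat.lt_succ_self _)

def grammar : PEG CSym := ⟨NT, inferInstance, rules, .blocks⟩

open CSym List

variable {x z : List CSym}

theorem pegRec_rules_none {e : PExp CSym NT} (h : ∀ z, ¬ Leaves rules e x z) :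
    PegRec rules e x none :=
  pegRec_none_of_forall_not_leaves rules_total h

theorem leaves_carry_iff :
    Leaves rules (.nt .carry) x z ↔
      ∃ j, x = replicate j b0 ++ hash :: (replicate j b1 ++ z) := by
  constructor
  · induction x generalizing z with
    | nil =>
      rw [leaves_nt_iff, rules]
      simp [leaves_choice_iff, leaves_seq_iff, leaves_term_iff]
    | cons c x ih =>
      rw [leaves_nt_iff, rules]
      simp only [leaves_choice_iff, leaves_seq_iff, leaves_term_iff]
      rintro (⟨_, ⟨rfl, rfl⟩, w, h, rfl⟩ | ⟨-, rfl, rfl⟩)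
      · obtain ⟨j, rfl⟩ := ih h
        exact ⟨j + 1, by rw [replicate_succ, replicate_succ']; simp⟩
      · exact ⟨0, rfl⟩
  · rintro ⟨j, rfl⟩
    induction j generalizing z with
    | zero =>
      refine .nt <| .choice_right (pegRec_rules_none fun w => ?_) (.term _ _)
      simp [leaves_seq_iff, leaves_term_iff]
    | succ j ih =>
      rw [show replicate (j + 1) b0 ++ hash :: (replicate (j + 1) b1 ++ z) =
        b0 :: (replicate j b0 ++ hash :: (replicate j b1 ++ b1 :: z)) by
        rw [replicate_succ, replicate_succ']; simp]
      exact .nt <| .choice_left <| .seq (.term _ _) <| .seq ih (.term _ _)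

theorem exists_of_leaves_incr (h : Leaves rules (.nt .incr) x z) : ∃ w j,
    x = bitsToCSym (w ++ true :: replicate j false) ++
      hash :: (bitsToCSym (replicate j true ++ false :: w.reverse) ++ z) := by
  induction x generalizing z with
  | nil =>
    rw [leaves_nt_iff, rules] at h
    simp [leaves_choice_iff, leaves_seq_iff, leaves_term_iff] at h
  | cons c x ih =>
    rw [leaves_nt_iff, rules] at h
    simp only [leaves_choice_iff, leaves_seq_iff, leaves_term_iff] at h
    rcases h with ⟨_, ⟨rfl, rfl⟩, _, h, rfl⟩ | ⟨-, ⟨_, ⟨rfl, rfl⟩, _, h, rfl⟩ |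
      ⟨-, _, ⟨rfl, rfl⟩, _, h, rfl⟩⟩
    · obtain ⟨w, j, rfl⟩ := ih h
      exact ⟨false :: w, j, by simp⟩
    · obtain ⟨w, j, rfl⟩ := ih h
      exact ⟨true :: w, j, by simp⟩
    · obtain ⟨j, rfl⟩ := leaves_carry_iff.1 h
      exact ⟨[], j, by simp⟩

theorem leaves_incr_iff : Leaves rules (.nt .incr) x z ↔ ∃ w j,
    x = bitsToCSym (w ++ true :: replicate j false) ++
      hash :: (bitsToCSym (replicate j true ++ false :: w.reverse) ++ z) := by
  refine ⟨exists_of_leaves_incr, ?_⟩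
  rintro ⟨w, j, rfl⟩
  induction w generalizing z with
  | nil =>
    have hincr : ∀ w, ¬ Leaves rules (.nt .incr)
        (replicate j b0 ++ hash :: (replicate j b1 ++ b0 :: z)) w := by
      intro w h
      obtain ⟨w', i, h⟩ := exists_of_leaves_incr h
      rw [← bitsToCSym_replicate_false, List.append_cons_eq_iff_of_notMem (by simp) (by simp),
        bitsToCSym_inj] at h
      simpa using congrArg (true ∈ ·) h.1
    simp only [nil_append, reverse_nil, bitsToCSym_cons_true, bitsToCSym_append,
      bitsToCSym_replicate_false, bitsToCSym_replicate_true, bitsToCSym_cons_false,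
      bitsToCSym_nil, cons_append, append_assoc]
    refine .nt <| .choice_right (pegRec_rules_none fun w => ?_) <|
      .choice_right (pegRec_rules_none fun w => ?_) <|
      .seq (.term _ _) <| .seq (leaves_carry_iff.2 ⟨j, rfl⟩) (.term _ _)
    · simp [leaves_seq_iff, leaves_term_iff]
    · simp only [leaves_seq_iff, leaves_term_iff]
      rintro ⟨_, ⟨-, rfl⟩, w', h, -⟩
      exact hincr w' h
  | cons b w ih =>
    cases b
    · rw [show bitsToCSym (false :: w ++ true :: replicate j false) ++ hash ::
          (bitsToCSym (replicate j true ++ false :: (false :: w).reverse) ++ z) =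
          b0 :: (bitsToCSym (w ++ true :: replicate j false) ++ hash ::
            (bitsToCSym (replicate j true ++ false :: w.reverse) ++ b0 :: z)) by simp]
      exact .nt <| .choice_left <| .seq (.term _ _) <| .seq ih (.term _ _)
    · rw [show bitsToCSym (true :: w ++ true :: replicate j false) ++ hash ::
          (bitsToCSym (replicate j true ++ false :: (true :: w).reverse) ++ z) =
          b1 :: (bitsToCSym (w ++ true :: replicate j false) ++ hash ::
            (bitsToCSym (replicate j true ++ false :: w.reverse) ++ b1 :: z)) by simp]
      refine .nt <| .choice_right (pegRec_rules_none fun w => ?_) <|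
        .choice_left <| .seq (.term _ _) <| .seq ih (.term _ _)
      simp [leaves_seq_iff, leaves_term_iff]

theorem leaves_incrCheck_iff {u v : List Bool} {t : List CSym} :
    (∃ w, Leaves rules incrCheck (bitsToCSym u ++ hash :: (bitsToCSym v ++ circ :: t)) w) ↔
      u = (incBits v).reverse := by
  have split {u v u' v' : List Bool} {t t' : List CSym}
      (h : bitsToCSym u ++ hash :: (bitsToCSym v ++ circ :: t) =
        bitsToCSym u' ++ hash :: (bitsToCSym v' ++ circ :: t')) : u = u' ∧ v = v' := by
    rw [List.append_cons_eq_iff_of_notMem (by simp) (by simp),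
      List.append_cons_eq_iff_of_notMem (by simp) (by simp)] at h
    simp_all
  rw [incrCheck]
  simp only [leaves_choice_iff, leaves_seq_iff, leaves_term_iff]
  constructor
  · rintro ⟨w, ⟨_, h, rfl⟩ | ⟨-, _, h₁, _, h, rfl⟩⟩
    · obtain ⟨w', j, h⟩ := leaves_incr_iff.1 h
      obtain ⟨rfl, rfl⟩ := split h
      simp [incBits_replicate_true_append]
    · obtain ⟨j, rfl⟩ := leaves_carry_iff.1 h
      rw [show b1 :: (replicate j b0 ++ hash :: (replicate j b1 ++ circ :: w)) =
        bitsToCSym (true :: replicate j false) ++ hash ::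
          (bitsToCSym (replicate j true) ++ circ :: w) by simp] at h₁
      obtain ⟨rfl, rfl⟩ := split h₁
      simp [incBits_replicate_true]
  · rintro rfl
    rcases List.eq_replicate_true_append_or v with ⟨j, l, rfl⟩ | ⟨j, rfl⟩
    · refine ⟨t, .inl ⟨circ :: t, leaves_incr_iff.2 ⟨l.reverse, j, ?_⟩, rfl⟩⟩
      simp [incBits_replicate_true_append]
    · refine ⟨t, .inr ⟨pegRec_rules_none fun w => ?_, _, ?_, _,
        leaves_carry_iff.2 ⟨j, rfl⟩, rfl⟩⟩
      · simp only [leaves_seq_iff, leaves_term_iff]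
        rintro ⟨_, h, rfl⟩
        obtain ⟨w', i, h⟩ := leaves_incr_iff.1 h
        simpa using congrArg (false ∈ ·) (split h).2
      · simp [incBits_replicate_true]

theorem leaves_block_iff : Leaves rules (.nt .block) x z ↔ ∃ ρ,
    x = bitsToCSym ρ ++ circ :: (bitsToCSym ρ.reverse ++ z) ∧
      ∃ w, Leaves rules incrCheck (bitsToCSym ρ.reverse ++ z) w := by
  constructor
  · induction x generalizing z with
    | nil =>
      rw [leaves_nt_iff, rules]
      simp [leaves_choice_iff, leaves_seq_iff, leaves_term_iff]
    | cons c x ih =>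
      rw [leaves_nt_iff, rules]
      simp only [leaves_choice_iff, leaves_seq_iff, leaves_term_iff, leaves_andP_iff]
      rintro (⟨_, ⟨rfl, rfl⟩, _, h, rfl⟩ | ⟨-, ⟨_, ⟨rfl, rfl⟩, _, h, rfl⟩ |
        ⟨-, _, ⟨rfl, rfl⟩, rfl, hc⟩⟩)
      · obtain ⟨ρ, rfl, hc⟩ := ih h
        exact ⟨false :: ρ, by simp, by simpa using hc⟩
      · obtain ⟨ρ, rfl, hc⟩ := ih h
        exact ⟨true :: ρ, by simp, by simpa using hc⟩
      · exact ⟨[], by simp, hc⟩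
  · rintro ⟨ρ, rfl, w, hc⟩
    induction ρ generalizing z with
    | nil =>
      refine .nt <| .choice_right (pegRec_rules_none fun w => ?_) <|
        .choice_right (pegRec_rules_none fun w => ?_) <| .seq (.term _ _) (.andP hc) <;>
      simp [leaves_seq_iff, leaves_term_iff]
    | cons b ρ ih =>
      cases b
      · rw [show bitsToCSym (false :: ρ) ++ circ :: (bitsToCSym (false :: ρ).reverse ++ z) =
          b0 :: (bitsToCSym ρ ++ circ :: (bitsToCSym ρ.reverse ++ b0 :: z)) by simp]
        exact .nt <| .choice_left <| .seq (.term _ _) <| .seq (ih (by simpa using hc)) (.term _ _)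
      · rw [show bitsToCSym (true :: ρ) ++ circ :: (bitsToCSym (true :: ρ).reverse ++ z) =
          b1 :: (bitsToCSym ρ ++ circ :: (bitsToCSym ρ.reverse ++ b1 :: z)) by simp]
        refine .nt <| .choice_right (pegRec_rules_none fun w => ?_) <|
          .choice_left <| .seq (.term _ _) <| .seq (ih (by simpa using hc)) (.term _ _)
        simp [leaves_seq_iff, leaves_term_iff]

def countingWord (n : ℕ) : List CSym := ((range (n + 1)).reverse.map countBlock).flatten

theorem countingWord_zero : countingWord 0 = [b0, circ, b0, hash] := by
  simp [countingWord, countBlock, natBin, bitsToCSym]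

theorem countingWord_succ (n : ℕ) :
    countingWord (n + 1) = countBlock (n + 1) ++ countingWord n := by
  simp [countingWord, range_succ]

theorem countBlock_append (n : ℕ) (t : List CSym) : countBlock n ++ t =
    bitsToCSym (natBin n).reverse ++ circ :: (bitsToCSym (natBin n) ++ hash :: t) := by
  simp [countBlock]

theorem exists_countingWord_eq (n : ℕ) :
    ∃ t, countingWord n = bitsToCSym (natBin n).reverse ++ circ :: t := by
  cases n with
  | zero => exact ⟨_, countingWord_zero⟩
  | succ n => exact ⟨_, by rw [countingWord_succ, countBlock_append]⟩

theorem countingWord_succ_append_ne (n : ℕ) (z w : List CSym) :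
    countingWord (n + 1) ++ z ≠ b0 :: circ :: w := by
  obtain ⟨t, ht⟩ := exists_countingWord_eq (n + 1)
  rw [ht, append_assoc, cons_append]
  intro h
  have h₀ := (List.append_cons_eq_iff_of_notMem (x₂ := bitsToCSym [false])
    (by simp) (by simp)).1 h
  rw [bitsToCSym_inj, natBin_add_one, reverse_reverse] at h₀
  simpa [h₀.1] using true_mem_incBits (natBin n).reverse

theorem leaves_blocks_iff : Leaves rules (.nt .blocks) x z ↔ ∃ n, x = countingWord n ++ z := by
  constructor
  · induction hx : x.length using Nat.strong_induction_on generalizing x with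
    | _ k ih =>
      subst hx
      rw [leaves_nt_iff, rules]
      simp only [leaves_choice_iff, leaves_seq_iff, leaves_term_iff]
      rintro (⟨_, rfl, _, rfl, _, rfl, _, rfl, rfl⟩ | ⟨-, _, hblock, _, rfl, h⟩)
      · exact ⟨0, by simp [countingWord_zero]⟩
      obtain ⟨ρ, rfl, hcheck⟩ := leaves_block_iff.1 hblock
      obtain ⟨m, rfl⟩ := ih _ (by simp; omega) rfl h
      obtain ⟨t, ht⟩ := exists_countingWord_eq m
      rw [ht, append_assoc, cons_append, leaves_incrCheck_iff, ← natBin_add_one] at hcheck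
      refine ⟨m + 1, ?_⟩
      rw [countingWord_succ, append_assoc, countBlock_append, ← hcheck, reverse_reverse]
  · rintro ⟨n, rfl⟩
    induction n with
    | zero =>
      rw [countingWord_zero]
      exact .nt <| .choice_left <| .seq (.term _ _) <| .seq (.term _ _) <|
        .seq (.term _ _) (.term _ _)
    | succ n ih =>
      obtain ⟨t, ht⟩ := exists_countingWord_eq n
      have hcheck : ∃ w, Leaves rules incrCheck
          (bitsToCSym (natBin (n + 1)) ++ hash :: (countingWord n ++ z)) w := by
        rw [ht, append_assoc, cons_append, leaves_incrCheck_iff, natBin_add_one]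
      have hblock : Leaves rules (.nt .block) (countingWord (n + 1) ++ z)
          (hash :: (countingWord n ++ z)) := by
        rw [leaves_block_iff]
        refine ⟨(natBin (n + 1)).reverse, ?_, by rwa [reverse_reverse]⟩
        rw [countingWord_succ, append_assoc, countBlock_append, reverse_reverse]
      refine .nt <| .choice_right (pegRec_rules_none fun w => ?_) <|
        .seq hblock <| .seq (.term _ _) ih
      simp only [leaves_seq_iff, leaves_term_iff]
      rintro ⟨_, h, _, rfl, _, rfl, _, rfl, rfl⟩
      exact countingWord_succ_append_ne n z _ h

end ReversedCounting

/-- The reversed counting language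
`{ (n)₂ʳ∘(n)₂# (n−1)₂ʳ∘(n−1)₂# ⋯ # (0)₂ʳ∘(0)₂# : n ≥ 0 }` over `{0,1,#,∘}`
is recognised by some total PEG. -/
theorem reversedCounting_isPEG :
    IsPEGLang { s : List CSym |
      ∃ n : ℕ, s = (((List.range (n + 1)).reverse.map countBlock)).flatten } := by
  refine ⟨ReversedCounting.grammar, ReversedCounting.rules_total, Set.ext fun s => ?_⟩
  show PegRec ReversedCounting.rules (.nt .blocks) s (some s) ↔
    ∃ n, s = ReversedCounting.countingWord n
  rw [pegRec_some_self_iff, ReversedCounting.leaves_blocks_iff]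
  simp
end

section
/- For every total parsing expression grammar G there exists a total parsing expression grammar G' recognising the same language, in which the rule of every non-terminal has one of the following forms: A ← ε; A ← FAIL; A ← t with t a terminal symbol; A ← !B; A ← &B; A ← BC; or A ← B/C, where B, C are non-terminal symbols. -/
/-- A parsing expression is *simple* if it has one of the forms
`ε`, `FAIL`, `t` (a terminal), `!B`, `&B`, `BC`, or `B/C`
with `B`, `C` non-terminal symbols. -/
def SimpleRule {α ν : Type} (e : PExp α ν) : Prop :=
  e = .eps ∨ e = .fail ∨ (∃ a : α, e = .term a) ∨
  (∃ B : ν, e = .notP (.nt B)) ∨ (∃ B : ν, e = .andP (.nt B)) ∨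
  (∃ B C : ν, e = .seq (.nt B) (.nt C)) ∨
  (∃ B C : ν, e = .choice (.nt B) (.nt C))

namespace PegNF

variable {α ν : Type}

/-- All subexpressions of a parsing expression (including itself). -/
def subExprs : PExp α ν → List (PExp α ν)
  | .notP e => .notP e :: subExprs e
  | .andP e => .andP e :: subExprs e
  | .seq e₁ e₂ => .seq e₁ e₂ :: (subExprs e₁ ++ subExprs e₂)
  | .choice e₁ e₂ => .choice e₁ e₂ :: (subExprs e₁ ++ subExprs e₂)
  | e => [e]

lemma mem_subExprs_self (e : PExp α ν) : e ∈ subExprs e := by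
  cases e <;> simp [subExprs]

lemma subExprs_trans :
    ∀ e₂ e₁ x : PExp α ν, e₁ ∈ subExprs e₂ → x ∈ subExprs e₁ → x ∈ subExprs e₂ := by
  intro e₂
  induction e₂ with
  | eps => intro e₁ x h hx; simp [subExprs] at h; subst h; simpa [subExprs] using hx
  | fail => intro e₁ x h hx; simp [subExprs] at h; subst h; simpa [subExprs] using hx
  | term a => intro e₁ x h hx; simp [subExprs] at h; subst h; simpa [subExprs] using hx
  | nt A => intro e₁ x h hx; simp [subExprs] at h; subst h; simpa [subExprs] using hx
  | notP e ih =>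
      intro e₁ x h hx
      simp only [subExprs, List.mem_cons] at h ⊢
      rcases h with rfl | h
      · simpa [subExprs] using hx
      · exact Or.inr (ih _ _ h hx)
  | andP e ih =>
      intro e₁ x h hx
      simp only [subExprs, List.mem_cons] at h ⊢
      rcases h with rfl | h
      · simpa [subExprs] using hx
      · exact Or.inr (ih _ _ h hx)
  | seq e₁ e₂ ih₁ ih₂ =>
      intro f x h hx
      simp only [subExprs, List.mem_cons, List.mem_append] at h ⊢
      rcases h with rfl | h | h
      · simpa [subExprs] using hx
      · exact Or.inr (Or.inl (ih₁ _ _ h hx))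
      · exact Or.inr (Or.inr (ih₂ _ _ h hx))
  | choice e₁ e₂ ih₁ ih₂ =>
      intro f x h hx
      simp only [subExprs, List.mem_cons, List.mem_append] at h ⊢
      rcases h with rfl | h | h
      · simpa [subExprs] using hx
      · exact Or.inr (Or.inl (ih₁ _ _ h hx))
      · exact Or.inr (Or.inr (ih₂ _ _ h hx))

/-- The closure set of non-terminals for the normal-form grammar. -/
def T (R : ν → PExp α ν) : Set (PExp α ν) :=
  {e | e = .fail ∨ (∃ A, e = .nt A) ∨ ∃ A, e ∈ subExprs (R A)}

variable (R : ν → PExp α ν)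

lemma fail_mem : PExp.fail ∈ T R := Or.inl rfl

lemma nt_mem (A : ν) : PExp.nt A ∈ T R := Or.inr (Or.inl ⟨A, rfl⟩)

lemma rule_mem (A : ν) : R A ∈ T R := Or.inr (Or.inr ⟨A, mem_subExprs_self _⟩)

lemma notP_mem {e : PExp α ν} (h : PExp.notP e ∈ T R) : e ∈ T R := by
  rcases h with h | ⟨A, h⟩ | ⟨A, h⟩
  · simp at h
  · simp at h
  · exact Or.inr (Or.inr ⟨A, subExprs_trans _ _ _ h (by simp [subExprs, mem_subExprs_self])⟩)

lemma andP_mem {e : PExp α ν} (h : PExp.andP e ∈ T R) : e ∈ T R := by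
  rcases h with h | ⟨A, h⟩ | ⟨A, h⟩
  · simp at h
  · simp at h
  · exact Or.inr (Or.inr ⟨A, subExprs_trans _ _ _ h (by simp [subExprs, mem_subExprs_self])⟩)

lemma seq_mem {e₁ e₂ : PExp α ν} (h : PExp.seq e₁ e₂ ∈ T R) : e₁ ∈ T R ∧ e₂ ∈ T R := by
  rcases h with h | ⟨A, h⟩ | ⟨A, h⟩
  · simp at h
  · simp at h
  · exact ⟨Or.inr (Or.inr ⟨A, subExprs_trans _ _ _ h (by simp [subExprs, mem_subExprs_self])⟩),
      Or.inr (Or.inr ⟨A, subExprs_trans _ _ _ h (by simp [subExprs, mem_subExprs_self])⟩)⟩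

lemma choice_mem {e₁ e₂ : PExp α ν} (h : PExp.choice e₁ e₂ ∈ T R) : e₁ ∈ T R ∧ e₂ ∈ T R := by
  rcases h with h | ⟨A, h⟩ | ⟨A, h⟩
  · simp at h
  · simp at h
  · exact ⟨Or.inr (Or.inr ⟨A, subExprs_trans _ _ _ h (by simp [subExprs, mem_subExprs_self])⟩),
      Or.inr (Or.inr ⟨A, subExprs_trans _ _ _ h (by simp [subExprs, mem_subExprs_self])⟩)⟩

lemma T_finite [Finite ν] : (T R).Finite := by
  have h : T R ⊆ insert PExp.fail
      ((⋃ A : ν, {PExp.nt A}) ∪ ⋃ A : ν, {e | e ∈ subExprs (R A)}) := by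
    intro e he
    rcases he with rfl | ⟨A, rfl⟩ | ⟨A, hA⟩
    · exact Set.mem_insert _ _
    · exact Set.mem_insert_of_mem _ (Or.inl (Set.mem_iUnion.2 ⟨A, rfl⟩))
    · exact Set.mem_insert_of_mem _ (Or.inr (Set.mem_iUnion.2 ⟨A, hA⟩))
  refine Set.Finite.subset ?_ h
  refine (Set.Finite.union ?_ ?_).insert _
  · exact Set.finite_iUnion fun A => Set.finite_singleton _
  · exact Set.finite_iUnion fun A => (subExprs (R A)).finite_toSet

/-- One-step simple rule for each expression in the closure. -/
def step : (e : PExp α ν) → e ∈ T R → PExp α (↥(T R))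
  | .eps, _ => .eps
  | .fail, _ => .fail
  | .term a, _ => .term a
  | .nt A, _ => .choice (.nt ⟨R A, rule_mem R A⟩) (.nt ⟨.fail, fail_mem R⟩)
  | .notP e, h => .notP (.nt ⟨e, notP_mem R h⟩)
  | .andP e, h => .andP (.nt ⟨e, andP_mem R h⟩)
  | .seq e₁ e₂, h => .seq (.nt ⟨e₁, (seq_mem R h).1⟩) (.nt ⟨e₂, (seq_mem R h).2⟩)
  | .choice e₁ e₂, h => .choice (.nt ⟨e₁, (choice_mem R h).1⟩) (.nt ⟨e₂, (choice_mem R h).2⟩)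

/-- The rules of the normal-form grammar. -/
def R' : ↥(T R) → PExp α (↥(T R)) := fun e => step R e.1 e.2

/-- Projection back to expressions over the original non-terminals. -/
def π : PExp α (↥(T R)) → PExp α ν
  | .eps => .eps
  | .fail => .fail
  | .term a => .term a
  | .nt e => e.1
  | .notP e => .notP (π e)
  | .andP e => .andP (π e)
  | .seq e₁ e₂ => .seq (π e₁) (π e₂)
  | .choice e₁ e₂ => .choice (π e₁) (π e₂)

lemma fwd {e : PExp α ν} {x : List α} {r : Option (List α)}
    (hd : PegRec R e x r) : ∀ h : e ∈ T R, PegRec (R' R) (.nt ⟨e, h⟩) x r := by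
  induction hd with
  | eps x => intro h; exact .ntRule _ _ _ (.eps x)
  | fail x => intro h; exact .ntRule _ _ _ (.fail x)
  | termOk a z => intro h; exact .ntRule _ _ _ (.termOk a z)
  | termMismatch a b z hab => intro h; exact .ntRule _ _ _ (.termMismatch a b z hab)
  | termNil a => intro h; exact .ntRule _ _ _ (.termNil a)
  | notFail e x _ ih => intro h; exact .ntRule _ _ _ (.notFail _ _ (ih _))
  | notSucc e x y _ ih => intro h; exact .ntRule _ _ _ (.notSucc _ _ _ (ih _))
  | andSucc e x y _ ih => intro h; exact .ntRule _ _ _ (.andSucc _ _ _ (ih _))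
  | andFail e x _ ih => intro h; exact .ntRule _ _ _ (.andFail _ _ (ih _))
  | seqOk e₁ e₂ y₁ z y₂ _ _ ih₁ ih₂ =>
      intro h; exact .ntRule _ _ _ (.seqOk _ _ _ _ _ (ih₁ _) (ih₂ _))
  | seqFail₁ e₁ e₂ x _ ih => intro h; exact .ntRule _ _ _ (.seqFail₁ _ _ _ (ih _))
  | seqFail₂ e₁ e₂ y₁ z _ _ ih₁ ih₂ =>
      intro h; exact .ntRule _ _ _ (.seqFail₂ _ _ _ _ (ih₁ _) (ih₂ _))
  | choice₁ e₁ e₂ x y _ ih => intro h; exact .ntRule _ _ _ (.choice₁ _ _ _ _ (ih _))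
  | choice₂ e₁ e₂ x r _ _ ih₁ ih₂ =>
      intro h; exact .ntRule _ _ _ (.choice₂ _ _ _ _ (ih₁ _) (ih₂ _))
  | ntRule A x r _ ih =>
      intro h
      refine .ntRule _ _ _ ?_
      show PegRec (R' R) (.choice (.nt ⟨R A, rule_mem R A⟩) (.nt ⟨.fail, fail_mem R⟩)) x r
      cases r with
      | some y => exact .choice₁ _ _ _ _ (ih _)
      | none => exact .choice₂ _ _ _ _ (ih _) (.ntRule _ _ _ (.fail x))

lemma bwd {e' : PExp α (↥(T R))} {x : List α} {r : Option (List α)}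
    (hd : PegRec (R' R) e' x r) : PegRec R (π R e') x r := by
  induction hd with
  | eps x => exact .eps x
  | fail x => exact .fail x
  | termOk a z => exact .termOk a z
  | termMismatch a b z hab => exact .termMismatch a b z hab
  | termNil a => exact .termNil a
  | notFail e x _ ih => exact .notFail _ _ ih
  | notSucc e x y _ ih => exact .notSucc _ _ _ ih
  | andSucc e x y _ ih => exact .andSucc _ _ _ ih
  | andFail e x _ ih => exact .andFail _ _ ih
  | seqOk e₁ e₂ y₁ z y₂ _ _ ih₁ ih₂ => exact .seqOk _ _ _ _ _ ih₁ ih₂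
  | seqFail₁ e₁ e₂ x _ ih => exact .seqFail₁ _ _ _ ih
  | seqFail₂ e₁ e₂ y₁ z _ _ ih₁ ih₂ => exact .seqFail₂ _ _ _ _ ih₁ ih₂
  | choice₁ e₁ e₂ x y _ ih => exact .choice₁ _ _ _ _ ih
  | choice₂ e₁ e₂ x r _ _ ih₁ ih₂ => exact .choice₂ _ _ _ _ ih₁ ih₂
  | ntRule A x r hrec ih =>
      obtain ⟨e, he⟩ := A
      cases e with
      | eps => exact ih
      | fail => exact ih
      | term a => exact ih
      | notP e => exact ih
      | andP e => exact ih
      | seq e₁ e₂ => exact ih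
      | choice e₁ e₂ => exact ih
      | nt B =>
          show PegRec R (.nt B) x r
          have ih' : PegRec R (.choice (R B) .fail) x r := ih
          cases ih' with
          | choice₁ _ _ _ y h1 => exact .ntRule _ _ _ h1
          | choice₂ _ _ _ _ h1 h2 => cases h2; exact .ntRule _ _ _ h1

lemma rec_prefix {ν₀ : Type} {R₀ : ν₀ → PExp α ν₀} {e : PExp α ν₀} {x : List α}
    {r : Option (List α)} (hd : PegRec R₀ e x r) :
    ∀ y, r = some y → ∃ z, x = y ++ z := by
  induction hd with
  | eps x => intro y hy; cases hy; exact ⟨x, rfl⟩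
  | fail x => intro y hy; cases hy
  | termOk a z => intro y hy; cases hy; exact ⟨z, rfl⟩
  | termMismatch a b z hab => intro y hy; cases hy
  | termNil a => intro y hy; cases hy
  | notFail e x _ _ => intro y hy; cases hy; exact ⟨x, rfl⟩
  | notSucc e x y _ _ => intro y hy; cases hy
  | andSucc e x y _ _ => intro y hy; cases hy; exact ⟨x, rfl⟩
  | andFail e x _ _ => intro y hy; cases hy
  | seqOk e₁ e₂ y₁ z y₂ _ _ _ ih₂ =>
      intro y hy; cases hy
      obtain ⟨z', rfl⟩ := ih₂ y₂ rfl
      exact ⟨z', by simp⟩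
  | seqFail₁ e₁ e₂ x _ _ => intro y hy; cases hy
  | seqFail₂ e₁ e₂ y₁ z _ _ _ _ => intro y hy; cases hy
  | choice₁ e₁ e₂ x y _ ih => exact ih
  | choice₂ e₁ e₂ x r _ _ _ ih₂ => exact ih₂
  | ntRule A x r _ ih => exact ih

lemma total' (hG : ∀ (e : PExp α ν) (x : List α), ∃ r, PegRec R e x r) :
    ∀ (e' : PExp α (↥(T R))) (x : List α), ∃ r, PegRec (R' R) e' x r := by
  intro e'
  induction e' with
  | eps => intro x; exact ⟨_, .eps x⟩
  | fail => intro x; exact ⟨_, .fail x⟩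
  | term a =>
      intro x
      cases x with
      | nil => exact ⟨_, .termNil a⟩
      | cons b z =>
          by_cases h : a = b
          · subst h; exact ⟨_, .termOk a z⟩
          · exact ⟨_, .termMismatch a b z h⟩
  | nt A =>
      intro x
      obtain ⟨r, hr⟩ := hG A.1 x
      exact ⟨r, fwd R hr A.2⟩
  | notP e ih =>
      intro x
      obtain ⟨r, hr⟩ := ih x
      cases r with
      | none => exact ⟨_, .notFail _ _ hr⟩
      | some y => exact ⟨_, .notSucc _ _ _ hr⟩
  | andP e ih =>
      intro x
      obtain ⟨r, hr⟩ := ih x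
      cases r with
      | none => exact ⟨_, .andFail _ _ hr⟩
      | some y => exact ⟨_, .andSucc _ _ _ hr⟩
  | seq e₁ e₂ ih₁ ih₂ =>
      intro x
      obtain ⟨r₁, h₁⟩ := ih₁ x
      cases r₁ with
      | none => exact ⟨_, .seqFail₁ _ _ _ h₁⟩
      | some y₁ =>
          obtain ⟨z, rfl⟩ := rec_prefix h₁ y₁ rfl
          obtain ⟨r₂, h₂⟩ := ih₂ z
          cases r₂ with
          | none => exact ⟨_, .seqFail₂ _ _ _ _ h₁ h₂⟩
          | some y₂ => exact ⟨_, .seqOk _ _ _ _ _ h₁ h₂⟩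
  | choice e₁ e₂ ih₁ ih₂ =>
      intro x
      obtain ⟨r₁, h₁⟩ := ih₁ x
      cases r₁ with
      | some y => exact ⟨_, .choice₁ _ _ _ _ h₁⟩
      | none =>
          obtain ⟨r₂, h₂⟩ := ih₂ x
          exact ⟨r₂, .choice₂ _ _ _ _ h₁ h₂⟩

end PegNF

/-- Every total PEG is equivalent to a total PEG in which
the rule of every non-terminal has one of the forms
`A ← ε`, `A ← FAIL`, `A ← t`, `A ← !B`, `A ← &B`, `A ← BC`, `A ← B/C`. -/
theorem peg_normal_form (α : Type) [Fintype α] (G : PEG α) (hG : G.Total) :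
    ∃ G' : PEG α, G'.Total ∧ G'.Lang = G.Lang ∧ ∀ A : G'.ν, SimpleRule (G'.R A) := by
  haveI := G.finNT
  refine ⟨⟨↥(PegNF.T G.R), (PegNF.T_finite G.R).to_subtype, PegNF.R' G.R,
    ⟨.nt G.S, PegNF.nt_mem _ _⟩⟩, ?_, ?_, ?_⟩
  · exact PegNF.total' G.R hG
  · ext x
    constructor
    · intro h
      exact PegNF.bwd G.R h
    · intro h
      exact PegNF.fwd G.R h _
  · rintro ⟨e, he⟩
    show SimpleRule (PegNF.step G.R e he)
    cases e with
    | eps => exact Or.inl rfl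
    | fail => exact Or.inr (Or.inl rfl)
    | term a => exact Or.inr (Or.inr (Or.inl ⟨a, rfl⟩))
    | nt A => exact Or.inr (Or.inr (Or.inr (Or.inr (Or.inr (Or.inr ⟨_, _, rfl⟩)))))
    | notP e => exact Or.inr (Or.inr (Or.inr (Or.inl ⟨_, rfl⟩)))
    | andP e => exact Or.inr (Or.inr (Or.inr (Or.inr (Or.inl ⟨_, rfl⟩))))
    | seq e₁ e₂ => exact Or.inr (Or.inr (Or.inr (Or.inr (Or.inr (Or.inl ⟨_, _, rfl⟩)))))
    | choice e₁ e₂ => exact Or.inr (Or.inr (Or.inr (Or.inr (Or.inr (Or.inr ⟨_, _, rfl⟩)))))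
end
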